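/- arXiv:1908.11467 — 7 statements merged into one kernel-verified Lean document; each statement's English description precedes it below -/
import Mathlib

section
/- Let r, m be natural numbers, a, b1, b2 real numbers, and let q1, q2, p be real polynomials such that q1 and q2 have degree at most r+1, both have coefficient a at X^(r+1), have coefficients b1 and b2 respectively at X^r, and p is monic of degree m. Then the polynomial q1(X)·p(X) − q2(X)·p(X−1) has degree at most r+m, and its coefficient at X^(r+m) equals b1 − b2 + a·m. -/
/-!
Write `Δp = p - p(X - 1)` and split `q1·p - q2·p(X - 1) = (q1 - q2)·p + q2·Δp`. Since `q1` and `q2`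
share their top coefficient, `q1 - q2` has degree at most `r`, contributing `b1 - b2` at `X^(r+m)`.
Expanding `p(X - 1)` by Taylor's formula, `Δp` has degree at most `m - 1` with coefficient `m` at
`X^(m-1)`, so `q2·Δp` contributes `a·m`.
-/

open Polynomial

namespace Polynomial

theorem natDegree_sub_le_of_coeff_succ_eq {R : Type*} [Ring R] {f g : R[X]} {n : ℕ}
    (hf : f.natDegree ≤ n + 1) (hg : g.natDegree ≤ n + 1) (h : f.coeff (n + 1) = g.coeff (n + 1)) :
    (f - g).natDegree ≤ n := by
  rw [natDegree_le_iff_coeff_eq_zero]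
  intro k hk
  rcases (Nat.succ_le_of_lt hk).eq_or_lt with rfl | hk
  · rw [coeff_sub, h, sub_self]
  · rw [coeff_sub, coeff_eq_zero_of_natDegree_lt (hf.trans_lt hk),
      coeff_eq_zero_of_natDegree_lt (hg.trans_lt hk), sub_self]

section Taylor

variable {R : Type*} [CommRing R] {p : R[X]} {n : ℕ} (r : R)

theorem coeff_taylor_of_natDegree_le_succ (hp : p.natDegree ≤ n + 1) :
    (taylor r p).coeff n = p.coeff n + (n + 1) * r * p.coeff (n + 1) := by
  have hdeg : (hasseDeriv n p).natDegree ≤ 1 := (natDegree_hasseDeriv_le p n).trans (by omega)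
  rw [taylor_coeff, eval_eq_sum_range' (n := 2) (by omega), Finset.sum_range_succ,
    Finset.sum_range_one, hasseDeriv_coeff, hasseDeriv_coeff, zero_add, Nat.choose_self,
    add_comm 1 n, Nat.choose_succ_self_right]
  push_cast
  ring

theorem coeff_taylor_succ_of_natDegree_le_succ (hp : p.natDegree ≤ n + 1) :
    (taylor r p).coeff (n + 1) = p.coeff (n + 1) := by
  rw [coeff_taylor_of_natDegree_le_succ r (hp.trans n.succ.le_succ),
    coeff_eq_zero_of_natDegree_lt (show p.natDegree < n + 1 + 1 by omega), mul_zero, add_zero]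

theorem natDegree_sub_taylor_le (hp : p.natDegree ≤ n + 1) : (p - taylor r p).natDegree ≤ n :=
  natDegree_sub_le_of_coeff_succ_eq hp ((natDegree_taylor p r).trans_le hp)
    (coeff_taylor_succ_of_natDegree_le_succ r hp).symm

theorem coeff_sub_taylor (hp : p.natDegree ≤ n + 1) :
    (p - taylor r p).coeff n = -((n + 1) * r * p.coeff (n + 1)) := by
  rw [coeff_sub, coeff_taylor_of_natDegree_le_succ r hp]
  ring

theorem natDegree_mul_sub_taylor_le_and_coeff {q : R[X]} {k m : ℕ} (hq : q.natDegree ≤ k + 1) (hp : p.natDegree ≤ m) :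
    (q * (p - taylor r p)).natDegree ≤ k + m ∧
      (q * (p - taylor r p)).coeff (k + m) = -(m * r * q.coeff (k + 1) * p.coeff m) := by
  cases m with
  | zero =>
    rw [eq_C_of_natDegree_le_zero hp, taylor_C]
    simp
  | succ n =>
    rw [show k + (n + 1) = k + 1 + n by omega]
    refine ⟨natDegree_mul_le_of_le hq (natDegree_sub_taylor_le r hp), ?_⟩
    rw [coeff_mul_add_eq_of_natDegree_le hq (natDegree_sub_taylor_le r hp),
      coeff_sub_taylor r hp]
    push_cast
    ring

end Taylor

end Polynomial

/-- Lemma 1 of the paper: if `q1, q2` have degree at most `r+1`, share the same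
coefficient `a` at `X^(r+1)`, have coefficients `b1`, `b2` at `X^r`, and `p` is monic of
degree `m`, then `q1(X)·p(X) − q2(X)·p(X−1)` has degree at most `r+m` with coefficient
`b1 − b2 + a·m` at `X^(r+m)`. -/
theorem stmt_0 (r m : ℕ) (a b1 b2 : ℝ) (q1 q2 p : Polynomial ℝ)
    (hq1deg : q1.degree ≤ (r + 1 : ℕ)) (hq2deg : q2.degree ≤ (r + 1 : ℕ))
    (hq1a : q1.coeff (r + 1) = a) (hq2a : q2.coeff (r + 1) = a)
    (hq1b : q1.coeff r = b1) (hq2b : q2.coeff r = b2)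
    (hp : p.Monic) (hpdeg : p.natDegree = m) :
    (q1 * p - q2 * (p.comp (X - 1))).degree ≤ (r + m : ℕ) ∧
    (q1 * p - q2 * (p.comp (X - 1))).coeff (r + m) = b1 - b2 + a * m := by
  have hq2 : q2.natDegree ≤ r + 1 := natDegree_le_of_degree_le hq2deg
  have hq12 : (q1 - q2).natDegree ≤ r :=
    natDegree_sub_le_of_coeff_succ_eq (natDegree_le_of_degree_le hq1deg) hq2 (hq1a.trans hq2a.symm)
  have hsplit : q1 * p - q2 * p.comp (X - 1) = (q1 - q2) * p + q2 * (p - taylor (-1) p) := by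
    rw [taylor_apply, C_neg, C_1, ← sub_eq_add_neg]
    ring
  obtain ⟨hdeg, hcoeff⟩ := natDegree_mul_sub_taylor_le_and_coeff (-1) hq2 hpdeg.le
  have hlead : p.coeff m = 1 := hpdeg ▸ hp.coeff_natDegree
  rw [hsplit, ← natDegree_le_iff_degree_le, coeff_add, hcoeff,
    coeff_mul_add_eq_of_natDegree_le hq12 hpdeg.le, coeff_sub, hq1b, hq2b, hq2a, hlead]
  exact ⟨natDegree_add_le_of_degree_le (natDegree_mul_le_of_le hq12 hpdeg.le) hdeg, by ring⟩
end

section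
/- Fix n ∈ ℕ and b ∈ ℝ with b ≠ 0. Define P : ℝ → ℝ by P(x) = Σ_{j=0}^{n} (−1)^j C(n,j) b^(−j) Π_{i=0}^{j−1} (x − i). Then: (i) P is the evaluation of a real polynomial of degree exactly n; (ii) for every natural number k < n, the series Σ_{m=0}^{∞} P(m) · m^k · b^m / m! converges and has sum 0. -/
/-!
Writing `P = ∑ⱼ (-1)ʲ C(n,j) b⁻ʲ (X)ⱼ` with `(X)ⱼ` the falling factorial, `P` has degree `n`
because its top coefficient `(-1)ⁿ b⁻ⁿ` is nonzero. Since `(m)ⱼ bᵐ / m! = bʲ · bᵐ⁻ʲ / (m - j)!`,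
pairing the `j`-th term with a polynomial `q` against the weight `bᵐ / m!` gives the shifted series
`bʲ ∑ₗ q(l + j) bˡ / l!`. Summing over `j`, the coefficient of `bˡ / l!` is
`∑ⱼ (-1)ʲ C(n,j) q(l + j) = (-1)ⁿ Δⁿq(l)`, which vanishes when `deg q < n`.
-/

open Finset Polynomial Nat

theorem alternating_sum_eval_add_eq_zero {R : Type*} [CommRing R] {p : R[X]} {n : ℕ}
    (hp : p.natDegree < n) (x : R) :
    ∑ j ∈ range (n + 1), (-1 : R) ^ j * n.choose j * p.eval (x + j) = 0 := by
  have h := congr_fun (fwdDiff_iter_eq_zero_of_degree_lt hp) x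
  rw [fwdDiff_iter_eq_sum_shift, Pi.zero_apply] at h
  calc _ = (-1 : R) ^ n * ∑ j ∈ range (n + 1),
        ((-1 : ℤ) ^ (n - j) * n.choose j) • p.eval (x + j • 1) := by
        rw [mul_sum]
        refine sum_congr rfl fun j hj => ?_
        have hsign : (-1 : R) ^ j = (-1) ^ n * (-1) ^ (n - j) := by
          rw [← pow_add, show n + (n - j) = j + 2 * (n - j) by have := mem_range.1 hj; omega,
            pow_add, pow_mul]
          simp
        rw [zsmul_eq_mul, nsmul_one, hsign]
        push_cast
        ring
    _ = 0 := by rw [h, mul_zero]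

theorem summable_pow_mul_pow_div_factorial (r : ℕ) (x : ℝ) :
    Summable fun m : ℕ => (m : ℝ) ^ r * x ^ m / m ! := by
  refine ((Real.summable_pow_div_factorial (Real.exp 1 * |x|)).mul_left (r ! : ℝ)).of_norm_bounded
    fun m => ?_
  have hm : (m : ℝ) ^ r ≤ r ! * Real.exp 1 ^ m := by
    rw [← Real.exp_nat_mul, mul_one, ← div_le_iff₀' (by positivity)]
    exact Real.pow_div_factorial_le_exp _ m.cast_nonneg r
  rw [Real.norm_eq_abs, abs_div, abs_mul, abs_pow, abs_pow, Nat.abs_cast, Nat.abs_cast, mul_pow,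
    ← mul_div_assoc, ← mul_assoc]
  gcongr

theorem summable_eval_mul_pow_div_factorial (p : ℝ[X]) (x : ℝ) :
    Summable fun m : ℕ => p.eval (m : ℝ) * x ^ m / m ! := by
  have h : ∀ m : ℕ, p.eval (m : ℝ) * x ^ m / m ! =
      ∑ i ∈ range (p.natDegree + 1), p.coeff i * ((m : ℝ) ^ i * x ^ m / m !) := fun m => by
    rw [eval_eq_sum_range, sum_mul, sum_div]
    exact sum_congr rfl fun i _ => by ring
  simp only [h]
  exact summable_sum fun i _ => (summable_pow_mul_pow_div_factorial i x).mul_left _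

theorem hasSum_descFactorial_mul_pow_div_factorial {f : ℕ → ℝ} {x a : ℝ} (j : ℕ)
    (h : HasSum (fun l => f (l + j) * x ^ l / l !) a) :
    HasSum (fun m => (m.descFactorial j : ℝ) * f m * x ^ m / m !) (x ^ j * a) := by
  rw [← hasSum_nat_add_iff' j, sum_eq_zero fun i hi => by
    rw [Nat.descFactorial_eq_zero_iff_lt.2 (mem_range.1 hi), cast_zero, zero_mul, zero_mul,
      zero_div], sub_zero]
  refine (h.mul_left (x ^ j)).congr_fun fun l => ?_
  have hfac := Nat.factorial_mul_descFactorial (Nat.le_add_left j l)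
  rw [Nat.add_sub_cancel] at hfac
  have hdesc : ((l + j).descFactorial j : ℝ) ≠ 0 := by
    rw [cast_ne_zero, Ne, Nat.descFactorial_eq_zero_iff_lt]
    omega
  rw [← hfac, cast_mul]
  field_simp
  ring

noncomputable def charlierRodrigues (n : ℕ) (b : ℝ) : ℝ[X] :=
  ∑ j ∈ range (n + 1), ((-1) ^ j * n.choose j * b ^ (-(j : ℤ))) • descPochhammer ℝ j

theorem eval_charlierRodrigues (n : ℕ) (b x : ℝ) :
    (charlierRodrigues n b).eval x = ∑ j ∈ range (n + 1),
      (-1) ^ j * n.choose j * b ^ (-(j : ℤ)) * ∏ i ∈ range j, (x - i) := by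
  simp [charlierRodrigues, eval_finsetSum, descPochhammer_eval_eq_prod_range]

theorem eval_natCast_charlierRodrigues (n : ℕ) (b : ℝ) (m : ℕ) :
    (charlierRodrigues n b).eval (m : ℝ) = ∑ j ∈ range (n + 1),
      (-1) ^ j * n.choose j * b ^ (-(j : ℤ)) * m.descFactorial j := by
  simp [charlierRodrigues, eval_finsetSum, descPochhammer_eval_eq_descFactorial]

theorem degree_charlierRodrigues (n : ℕ) {b : ℝ} (hb : b ≠ 0) :
    (charlierRodrigues n b).degree = n := by
  have hdeg : ∀ j, (descPochhammer ℝ j).degree = j := fun j => by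
    rw [degree_eq_natDegree (monic_descPochhammer ℝ j).ne_zero, descPochhammer_natDegree]
  have hlead : ((-1) ^ n * n.choose n * b ^ (-(n : ℤ)) : ℝ) ≠ 0 := by simp [hb]
  have hlow : (∑ j ∈ range n, ((-1) ^ j * n.choose j * b ^ (-(j : ℤ))) • descPochhammer ℝ j)
      ∈ degreeLT ℝ n :=
    Submodule.sum_mem _ fun j hj => Submodule.smul_mem _ _ <| mem_degreeLT.2 <| by
      rw [hdeg]; exact_mod_cast mem_range.1 hj
  have htop : (((-1) ^ n * n.choose n * b ^ (-(n : ℤ)) : ℝ) • descPochhammer ℝ n).degree = n := by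
    rw [smul_eq_C_mul, degree_C_mul hlead, hdeg]
  rw [charlierRodrigues, sum_range_succ, degree_add_eq_right_of_degree_lt, htop]
  exact htop ▸ mem_degreeLT.1 hlow

theorem hasSum_eval_charlierRodrigues_mul_eq_zero (n : ℕ) {b : ℝ} (hb : b ≠ 0) {q : ℝ[X]}
    (hq : q.natDegree < n) :
    HasSum (fun m : ℕ => (charlierRodrigues n b).eval (m : ℝ) * q.eval (m : ℝ) * b ^ m / m !)
      0 := by
  set a : ℕ → ℝ := fun j => (-1) ^ j * n.choose j * b ^ (-(j : ℤ)) with ha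
  have hshift : ∀ j, Summable fun l : ℕ => q.eval (↑(l + j) : ℝ) * b ^ l / l ! := fun j =>
    (summable_eval_mul_pow_div_factorial (q.comp (X + C (j : ℝ))) b).congr fun l => by
      rw [eval_comp, eval_add, eval_X, eval_C, Nat.cast_add]
  have hterm : ∀ j, HasSum
      (fun m : ℕ => a j * ((m.descFactorial j : ℝ) * q.eval (m : ℝ) * b ^ m / m !))
      (a j * (b ^ j * ∑' l : ℕ, q.eval (↑(l + j) : ℝ) * b ^ l / l !)) := fun j =>
    (hasSum_descFactorial_mul_pow_div_factorial (f := fun m => q.eval (m : ℝ)) j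
      (hshift j).hasSum).mul_left (a j)
  have hzero :
      ∑ j ∈ range (n + 1), a j * (b ^ j * ∑' l : ℕ, q.eval (↑(l + j) : ℝ) * b ^ l / l !) = 0 :=
    calc _ = ∑' l : ℕ, ∑ j ∈ range (n + 1),
          (-1) ^ j * n.choose j * (q.eval (↑(l + j) : ℝ) * b ^ l / l !) := by
          rw [Summable.tsum_finsetSum fun j _ => (hshift j).mul_left _]
          refine sum_congr rfl fun j _ => ?_
          rw [tsum_mul_left]
          simp only [ha, zpow_neg, zpow_natCast]
          field_simp
      _ = ∑' l : ℕ, (∑ j ∈ range (n + 1), (-1) ^ j * n.choose j * q.eval ((l : ℝ) + j)) *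
          (b ^ l / l !) := by
          refine tsum_congr fun l => ?_
          rw [sum_mul]
          refine sum_congr rfl fun j _ => ?_
          push_cast
          ring
      _ = 0 := by simp [alternating_sum_eval_add_eq_zero hq]
  rw [← hzero]
  refine (hasSum_sum fun j _ => hterm j).congr_fun fun m => ?_
  rw [eval_natCast_charlierRodrigues, sum_mul, sum_mul, sum_div]
  refine sum_congr rfl fun j _ => ?_
  ring

/-- The Charlier case of the paper's Proposition: the polynomial
`P(x) = Σ_{j=0}^{n} (−1)^j C(n,j) b^(−j) Π_{i=0}^{j−1} (x − i)` coming from the discrete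
Rodrigues formula has degree exactly `n` and is orthogonal to `x^k`, `k < n`, with respect
to the Charlier weight `b^m/m!` on `ℤ₊`. -/
theorem stmt_1 (n : ℕ) (b : ℝ) (hb : b ≠ 0) (P : ℝ → ℝ)
    (hP : ∀ x : ℝ, P x = ∑ j ∈ Finset.range (n + 1),
      (-1 : ℝ) ^ j * (n.choose j : ℝ) * b ^ (-(j : ℤ)) *
        ∏ i ∈ Finset.range j, (x - (i : ℝ))) :
    (∃ p : Polynomial ℝ, p.degree = (n : ℕ) ∧ ∀ x : ℝ, P x = p.eval x) ∧
    (∀ k : ℕ, k < n →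
      HasSum (fun m : ℕ => P m * (m : ℝ) ^ k * b ^ m / (m.factorial : ℝ)) 0) := by
  have hP' : P = fun x => (charlierRodrigues n b).eval x :=
    funext fun x => by rw [hP, eval_charlierRodrigues]
  subst hP'
  refine ⟨⟨_, degree_charlierRodrigues n hb, fun _ => rfl⟩, fun k hk => ?_⟩
  simpa using hasSum_eval_charlierRodrigues_mul_eq_zero n hb (q := X ^ k) (by simpa using hk)
end

section
/- Fix n ∈ ℕ and b, α ∈ ℝ with 0 < |b| < 1 and α ≠ −m for every m ∈ ℕ. Define P : ℝ → ℝ by P(x) = Σ_{j=0}^{n} (−1)^j C(n,j) b^(−j) · Π_{i=0}^{j−1} (x − i) · Π_{i=0}^{n−j−1} (x + α + i). Then: (i) P is the evaluation of a real polynomial of degree exactly n; (ii) for every natural number k < n, the series Σ_{m=0}^{∞} P(m) · m^k · b^m · Γ(m+α) / m! converges and has sum 0. -/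
open Finset Filter Topology Polynomial
open scoped Nat

/-!
Writing `ρ_c(t) = b^t Γ(t + c) / t!` (`meixnerWeight b c`), the `j`-th summand of `P(m) ρ_α(m)`
equals `ρ_{α+n}(m - j)` for `m ≥ j` and vanishes for `m < j`; this is the Rodrigues formula
`P ρ_α = ∇ⁿ ρ_{α+n}`. Summing against `m^k` and shifting each summand by `j` moves the
differences onto the monomial: the series becomes `∑_t ρ_{α+n}(t) ∑_j (-1)^j C(n,j) (t+j)^k`,
and the inner sum is `±Δⁿ(x^k)(t) = 0` for `k < n`. All series converge by the ratio test, the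
ratio of consecutive weights tending to `b`. The leading coefficient of `P` is `(1 - b⁻¹)^n ≠ 0`.
-/

theorem Polynomial.degree_sum_smul_of_monic {ι R : Type*} [Semiring R] {s : Finset ι}
    {a : ι → R} {q : ι → R[X]} {n : ℕ} (hq : ∀ i ∈ s, (q i).Monic)
    (hdeg : ∀ i ∈ s, (q i).natDegree = n) (ha : ∑ i ∈ s, a i ≠ 0) :
    (∑ i ∈ s, a i • q i).degree = n := by
  refine degree_eq_of_le_of_coeff_ne_zero ?_ ?_
  · refine (degree_sum_le _ _).trans (Finset.sup_le fun i hi => ?_)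
    exact (degree_smul_le _ _).trans (hdeg i hi ▸ degree_le_natDegree)
  · rwa [finsetSum_coeff, Finset.sum_congr rfl fun i hi => by
      rw [coeff_smul, ← hdeg i hi, (hq i hi).coeff_natDegree, smul_eq_mul, mul_one]]

theorem sum_range_neg_one_pow_mul_choose_mul_add_pow_eq_zero {R : Type*} [CommRing R]
    {n k : ℕ} (hk : k < n) (t : R) :
    ∑ j ∈ range (n + 1), (-1) ^ j * (n.choose j : R) * (t + j) ^ k = 0 := by
  calc ∑ j ∈ range (n + 1), (-1) ^ j * (n.choose j : R) * (t + j) ^ k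
      = (-1) ^ n * (fwdDiff 1)^[n] (fun r : R => r ^ k) t := by
        rw [fwdDiff_iter_eq_sum_shift, mul_sum]
        refine sum_congr rfl fun j hj => ?_
        have hsign : (-1 : R) ^ n * (-1) ^ (n - j) = (-1) ^ j := by
          rw [← pow_add, show n + (n - j) = j + 2 * (n - j) by grind, pow_add, pow_mul]
          simp
        simp only [zsmul_eq_mul, nsmul_eq_mul, mul_one]
        push_cast
        rw [← hsign]
        ring
    _ = 0 := by rw [fwdDiff_iter_pow_eq_zero_of_lt hk, Pi.zero_apply, mul_zero]

theorem Real.Gamma_add_nat_eq_prod_mul {x : ℝ} (hx : ∀ m : ℕ, x ≠ -m) (r : ℕ) :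
    Real.Gamma (x + r) = (∏ i ∈ range r, (x + i)) * Real.Gamma x := by
  induction r with
  | zero => simp
  | succ r ih =>
    have hxr : x + r ≠ 0 := fun h => hx r (by linarith)
    rw [Nat.cast_succ, ← add_assoc, Real.Gamma_add_one hxr, ih, prod_range_succ]
    ring

noncomputable def rodriguesPoly (n : ℕ) (b α : ℝ) : ℝ[X] :=
  ∑ j ∈ range (n + 1), ((-1) ^ j * (n.choose j : ℝ) * b ^ (-(j : ℤ))) •
    ((∏ i ∈ range j, (X - C (i : ℝ))) * ∏ i ∈ range (n - j), (X - C (-(α + i))))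

theorem eval_rodriguesPoly (n : ℕ) (b α x : ℝ) :
    (rodriguesPoly n b α).eval x = ∑ j ∈ range (n + 1),
      (-1) ^ j * (n.choose j : ℝ) * b ^ (-(j : ℤ)) *
        (∏ i ∈ range j, (x - i)) * ∏ i ∈ range (n - j), (x + α + i) := by
  simp only [rodriguesPoly, eval_finsetSum, eval_smul, eval_mul, eval_prod, eval_sub, eval_X,
    eval_C, smul_eq_mul, sub_neg_eq_add, add_assoc, mul_assoc]

theorem degree_rodriguesPoly (n : ℕ) {b : ℝ} (hb : b ≠ 1) (α : ℝ) :
    (rodriguesPoly n b α).degree = n := by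
  refine degree_sum_smul_of_monic (fun j _ => (monic_prod_X_sub_C _ _).mul
    (monic_prod_X_sub_C _ _)) (fun j hj => ?_) ?_
  · rw [(monic_prod_X_sub_C _ _).natDegree_mul (monic_prod_X_sub_C _ _),
      natDegree_finsetProd_X_sub_C_eq_card, natDegree_finsetProd_X_sub_C_eq_card, card_range,
      card_range]
    grind
  · have hsum : ∑ j ∈ range (n + 1), (-1) ^ j * (n.choose j : ℝ) * b ^ (-(j : ℤ))
        = (1 - b⁻¹) ^ n := by
      rw [sub_eq_neg_add, add_pow]
      refine sum_congr rfl fun j _ => ?_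
      rw [zpow_neg, zpow_natCast, neg_pow b⁻¹, inv_pow]
      ring
    rw [hsum]
    exact pow_ne_zero _ (sub_ne_zero.mpr (by simpa [eq_comm] using hb))

noncomputable def meixnerWeight (b c : ℝ) (t : ℕ) : ℝ :=
  b ^ t * Real.Gamma (t + c) / t !

theorem meixnerWeight_succ (b : ℝ) {c : ℝ} {t : ℕ} (htc : (t : ℝ) + c ≠ 0) :
    meixnerWeight b c (t + 1) = b * ((t + c) / (t + 1)) * meixnerWeight b c t := by
  have ht : (t : ℝ) + 1 ≠ 0 := by positivity
  simp only [meixnerWeight, Nat.cast_succ, add_right_comm _ (1 : ℝ) c,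
    Real.Gamma_add_one htc, Nat.factorial_succ, Nat.cast_mul, pow_succ]
  field_simp

theorem meixnerWeight_ne_zero {b c : ℝ} (hb : b ≠ 0) {t : ℕ} (htc : 0 < (t : ℝ) + c) :
    meixnerWeight b c t ≠ 0 := by
  have := Real.Gamma_pos_of_pos htc
  unfold meixnerWeight
  positivity

theorem summable_add_pow_mul_meixnerWeight {b : ℝ} (hb0 : b ≠ 0) (hb1 : |b| < 1) (a c : ℝ)
    (k : ℕ) : Summable fun t : ℕ => ((t : ℝ) + a) ^ k * meixnerWeight b c t := by
  have hc : ∀ᶠ t : ℕ in atTop, 0 < (t : ℝ) + c :=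
    (tendsto_atTop_add_const_right _ c tendsto_natCast_atTop_atTop).eventually_gt_atTop 0
  have ha : ∀ᶠ t : ℕ in atTop, 0 < (t : ℝ) + a :=
    (tendsto_atTop_add_const_right _ a tendsto_natCast_atTop_atTop).eventually_gt_atTop 0
  have hpoly : Tendsto (fun t : ℕ => ‖(((t + 1 : ℕ) : ℝ) + a) ^ k‖ / ‖((t : ℝ) + a) ^ k‖)
      atTop (𝓝 1) := by
    have := ((tendsto_add_mul_div_add_mul_atTop_nhds (a + 1) a 1 one_ne_zero).norm.pow k)
    simp only [div_one, norm_one, one_pow] at this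
    refine this.congr fun t => ?_
    rw [← norm_pow, ← norm_div, div_pow]
    push_cast
    ring_nf
  have hweight : Tendsto (fun t : ℕ => ‖meixnerWeight b c (t + 1)‖ / ‖meixnerWeight b c t‖)
      atTop (𝓝 |b|) := by
    have := ((tendsto_add_mul_div_add_mul_atTop_nhds c 1 1 one_ne_zero).const_mul b).norm
    simp only [div_one, mul_one, one_mul, add_comm c, add_comm (1 : ℝ), Real.norm_eq_abs] at this
    refine this.congr' (hc.mono fun t ht => ?_)
    dsimp only
    rw [meixnerWeight_succ b ht.ne', norm_mul, mul_div_cancel_right₀ _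
      (norm_ne_zero_iff.mpr (meixnerWeight_ne_zero hb0 ht)), Real.norm_eq_abs]
  refine summable_of_ratio_test_tendsto_lt_one (l := 1 * |b|) (by linarith)
    ((hc.and ha).mono fun t ht => mul_ne_zero (pow_ne_zero _ ht.2.ne')
      (meixnerWeight_ne_zero hb0 ht.1)) ?_
  refine (hpoly.mul hweight).congr fun t => ?_
  rw [norm_mul, norm_mul, mul_div_mul_comm]

noncomputable def rodriguesTerm (n : ℕ) (b α : ℝ) (j : ℕ) (x : ℝ) : ℝ :=
  b ^ (-(j : ℤ)) * (∏ i ∈ range j, (x - i)) * ∏ i ∈ range (n - j), (x + α + i)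

theorem rodriguesTerm_natCast_of_lt (n : ℕ) (b α : ℝ) {j m : ℕ} (hm : m < j) :
    rodriguesTerm n b α j m = 0 := by
  rw [rodriguesTerm, prod_eq_zero (mem_range.mpr hm) (sub_self _), mul_zero, zero_mul]

theorem rodriguesTerm_mul_meixnerWeight_add {b α : ℝ} (hb : b ≠ 0) (hα : ∀ m : ℕ, α ≠ -m)
    {n j : ℕ} (hj : j ≤ n) (t : ℕ) :
    rodriguesTerm n b α j (t + j : ℕ) * meixnerWeight b α (t + j) =
      meixnerWeight b (α + n) t := by
  have hdesc : ∏ i ∈ range j, (((t + j : ℕ) : ℝ) - i) = (t + j)! / t ! := by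
    rw [← descPochhammer_eval_eq_prod_range, descPochhammer_eval_eq_descFactorial,
      eq_div_iff (by positivity), ← Nat.cast_mul, mul_comm,
      ← Nat.factorial_mul_descFactorial (Nat.le_add_left j t), Nat.add_sub_cancel]
  have hGamma : (∏ i ∈ range (n - j), (((t + j : ℕ) : ℝ) + α + i)) *
      Real.Gamma ((t + j : ℕ) + α) = Real.Gamma (t + (α + n)) := by
    rw [← Real.Gamma_add_nat_eq_prod_mul
      (fun m h => hα (t + j + m) (by push_cast at h ⊢; linarith)), Nat.cast_sub hj]
    push_cast
    ring_nf
  have hpow : b ^ (-(j : ℤ)) * b ^ (t + j) = b ^ t := by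
    rw [zpow_neg, zpow_natCast, pow_add, mul_comm, mul_assoc, mul_inv_cancel₀ (pow_ne_zero _ hb),
      mul_one]
  rw [rodriguesTerm, meixnerWeight, meixnerWeight, hdesc, ← hGamma, ← hpow]
  field_simp

theorem hasSum_pow_mul_rodriguesTerm_mul_meixnerWeight {b α : ℝ} (hb0 : b ≠ 0) (hb1 : |b| < 1)
    (hα : ∀ m : ℕ, α ≠ -m) {n j : ℕ} (hj : j ≤ n) (k : ℕ) :
    HasSum (fun m : ℕ => (m : ℝ) ^ k * (rodriguesTerm n b α j m * meixnerWeight b α m))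
      (∑' t : ℕ, ((t : ℝ) + j) ^ k * meixnerWeight b (α + n) t) := by
  rw [← hasSum_nat_add_iff' j, sum_eq_zero fun m hm => by
    rw [rodriguesTerm_natCast_of_lt n b α (mem_range.mp hm), zero_mul, mul_zero], sub_zero]
  refine (summable_add_pow_mul_meixnerWeight hb0 hb1 j (α + n) k).hasSum.congr_fun fun t => ?_
  rw [rodriguesTerm_mul_meixnerWeight_add hb0 hα hj, Nat.cast_add]

/-- The Meixner case of the paper's Proposition: the polynomial
`P(x) = Σ_{j=0}^{n} (−1)^j C(n,j) b^(−j) Π_{i=0}^{j−1}(x−i) Π_{i=0}^{n−j−1}(x+α+i)`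
coming from the discrete Rodrigues formula has degree exactly `n` and is orthogonal to
`x^k`, `k < n`, with respect to the Meixner weight `b^m Γ(m+α)/m!` on `ℤ₊`. -/
theorem stmt_2 (n : ℕ) (b α : ℝ) (hb0 : 0 < |b|) (hb1 : |b| < 1)
    (hα : ∀ m : ℕ, α ≠ -(m : ℝ)) (P : ℝ → ℝ)
    (hP : ∀ x : ℝ, P x = ∑ j ∈ Finset.range (n + 1),
      (-1 : ℝ) ^ j * (n.choose j : ℝ) * b ^ (-(j : ℤ)) *
        (∏ i ∈ Finset.range j, (x - (i : ℝ))) *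
        ∏ i ∈ Finset.range (n - j), (x + α + (i : ℝ))) :
    (∃ p : Polynomial ℝ, p.degree = (n : ℕ) ∧ ∀ x : ℝ, P x = p.eval x) ∧
    (∀ k : ℕ, k < n →
      HasSum (fun m : ℕ =>
        P m * (m : ℝ) ^ k * b ^ m * Real.Gamma ((m : ℝ) + α) / (m.factorial : ℝ)) 0) := by
  have hb : b ≠ 0 := abs_pos.mp hb0
  have hb_ne_one : b ≠ 1 := by rintro rfl; simp at hb1
  refine ⟨⟨rodriguesPoly n b α, degree_rodriguesPoly n hb_ne_one α,
    fun x => by rw [hP, eval_rodriguesPoly]⟩, fun k hk => ?_⟩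
  set c : ℕ → ℝ := fun j => (-1) ^ j * (n.choose j : ℝ)
  set S : ℕ → ℝ := fun j => ∑' t : ℕ, ((t : ℝ) + j) ^ k * meixnerWeight b (α + n) t
  have hrodrigues : HasSum (fun m : ℕ =>
      P m * (m : ℝ) ^ k * b ^ m * Real.Gamma ((m : ℝ) + α) / (m.factorial : ℝ))
      (∑ j ∈ range (n + 1), c j * S j) := by
    refine (hasSum_sum fun j hj => (hasSum_pow_mul_rodriguesTerm_mul_meixnerWeight hb hb1 hα
      (Nat.le_of_lt_succ (mem_range.mp hj)) k).mul_left (c j)).congr_fun fun m => ?_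
    rw [hP, sum_mul, sum_mul, sum_mul, sum_div]
    refine sum_congr rfl fun j _ => ?_
    simp only [c, rodriguesTerm, meixnerWeight]
    ring
  have hS : ∑ j ∈ range (n + 1), c j * S j = 0 := by
    refine ((hasSum_sum fun (j : ℕ) _ => (summable_add_pow_mul_meixnerWeight hb hb1 j (α + n)
      k).hasSum.mul_left (c j)).congr_fun fun t => ?_).unique hasSum_zero
    simp only [c, ← mul_assoc]
    rw [← sum_mul, sum_range_neg_one_pow_mul_choose_mul_add_pow_eq_zero hk, zero_mul]
  rwa [hS] at hrodrigues
end

section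
/- Fix N, n ∈ ℕ with n ≤ N, and α, β ∈ ℝ such that α ≠ −m and β ≠ −m for every integer m with 0 ≤ m ≤ N−1, and α + β ≠ −m for every integer m with 0 ≤ m ≤ 2N−2. Define Q : ℝ → ℝ by Q(x) = Σ_{j=0}^{n} (−1)^j C(n,j) · Π_{i=0}^{j−1} [(x − i)(β + N − x + i)] · Π_{i=0}^{n−j−1} [(x + α + i)(N − x − i)]. Then: (i) Q is the evaluation of a real polynomial of degree exactly n; (ii) for every natural number k < n, Σ_{m=0}^{N} Q(m) · m^k · w(m) = 0, where w(m) = (Π_{i=0}^{m−1}(α+i)) · (Π_{i=0}^{N−m−1}(β+i)) / (m! · (N−m)!). -/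
/-!
`Q = Q_n` for `b = β + N`, `c = α`, `d = N`, where `Q_m(x) = Σ_j (-1)^j C(m,j) u_j(x) v_{m-j}(x)`
with `u_j(x) = ∏_{i<j} (x - i)(b - x + i)` and `v_r(x) = ∏_{i<r} (x + c + i)(d - x - i)`.
Pascal's rule gives `Q_{m+1}(x) = (x + c)(d - x) Q'_m(x) - x(b - x) Q'_m(x - 1)`, where `Q'_m` is
built with `c + 1, d - 1`. In this step the terms of degree `m + 2` cancel and the coefficient of
`x^(m+1)` is that of `x^m` times `d - c - b - m`, so the leading coefficient of `Q` is
`∏_{i<n} (1 - n - i - (α + β))`, which the hypothesis on `α + β` keeps away from zero.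

At an integer point `m = t + j` the `j`-th term of `Q(m) w(m)` equals a number `g(t)` that does not
depend on `j`. Hence `Σ_m Q(m) m^k w(m) = Σ_t g(t) Σ_j (-1)^j C(n,j) (t + j)^k`, and each inner sum
is an `n`-th finite difference of a polynomial of degree `k < n`.
-/

open Finset Polynomial Nat

section CommRing

variable {R : Type*} [CommRing R]

theorem comp_X_sub_one_eq_taylor (p : R[X]) : p.comp (X - 1) = taylor (-1) p := by
  rw [taylor_apply, C_neg, C_1, ← sub_eq_add_neg]

theorem coeff_comp_X_sub_one {p : R[X]} {m : ℕ} (hp : p.natDegree ≤ m + 1) :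
    (p.comp (X - 1)).coeff m = p.coeff m - (m + 1) * p.coeff (m + 1) := by
  have hdeg : (hasseDeriv m p).natDegree < 2 :=
    (natDegree_hasseDeriv_le p m).trans_lt (by omega)
  rw [comp_X_sub_one_eq_taylor, taylor_coeff, eval_eq_sum_range' hdeg]
  simp only [hasseDeriv_coeff, sum_range_succ, range_one, sum_singleton, zero_add, choose_self,
    cast_one, one_mul, pow_zero, mul_one, add_comm 1 m, choose_succ_self_right, cast_add, pow_one,
    mul_neg]
  ring

theorem coeff_comp_X_sub_one_of_natDegree_le {p : R[X]} {m : ℕ} (hp : p.natDegree ≤ m) :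
    (p.comp (X - 1)).coeff m = p.coeff m := by
  rw [coeff_comp_X_sub_one (hp.trans m.le_succ),
    coeff_eq_zero_of_natDegree_lt (n := m + 1) (by omega), mul_zero, sub_zero]

theorem natDegree_X_mul_sub_comp_le {p : R[X]} {m : ℕ} (hp : p.natDegree ≤ m) :
    (X * (p - p.comp (X - 1))).natDegree ≤ m := by
  rw [natDegree_le_iff_coeff_eq_zero]
  rintro (_ | k) hk
  · exact absurd hk (by simp)
  have hcomp : (p.comp (X - 1)).natDegree ≤ m := by
    rwa [comp_X_sub_one_eq_taylor, natDegree_taylor]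
  rw [coeff_X_mul, coeff_sub]
  rcases (show m ≤ k by omega).eq_or_lt with rfl | hlt
  · rw [coeff_comp_X_sub_one_of_natDegree_le hp, sub_self]
  · rw [coeff_eq_zero_of_natDegree_lt (hp.trans_lt hlt),
      coeff_eq_zero_of_natDegree_lt (hcomp.trans_lt hlt), sub_zero]

theorem coeff_X_mul_sub_comp {p : R[X]} {m : ℕ} (hp : p.natDegree ≤ m) :
    (X * (p - p.comp (X - 1))).coeff m = m * p.coeff m := by
  cases m with
  | zero => simp
  | succ k =>
    rw [coeff_X_mul, coeff_sub, coeff_comp_X_sub_one hp]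
    push_cast
    ring

noncomputable def descAscPoly (b : R) (j : ℕ) : R[X] :=
  ∏ i ∈ range j, (X - (i : R[X])) * (C b - X + (i : R[X]))

noncomputable def ascDescPoly (c d : R) (r : ℕ) : R[X] :=
  ∏ i ∈ range r, (X + C c + (i : R[X])) * (C d - X - (i : R[X]))

noncomputable def hahnRodrigues (b c d : R) (m : ℕ) : R[X] :=
  ∑ j ∈ range (m + 1), (-1) ^ j * (m.choose j : R[X]) * descAscPoly b j * ascDescPoly c d (m - j)

noncomputable def hahnStep (b c d : R) (p : R[X]) : R[X] :=
  (X + C c) * (C d - X) * p - X * (C b - X) * p.comp (X - 1)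

theorem descAscPoly_succ (b : R) (j : ℕ) :
    descAscPoly b (j + 1) = X * (C b - X) * (descAscPoly b j).comp (X - 1) := by
  simp only [descAscPoly, prod_range_succ', Polynomial.prod_comp, mul_comp, sub_comp, add_comp,
    X_comp, C_comp, natCast_comp, Nat.cast_add, Nat.cast_one, Nat.cast_zero]
  rw [mul_comm]
  congr 1
  · ring
  · exact prod_congr rfl fun i _ => by ring

theorem ascDescPoly_succ (c d : R) (r : ℕ) :
    ascDescPoly c d (r + 1) = (X + C c) * (C d - X) * ascDescPoly (c + 1) (d - 1) r := by
  simp only [ascDescPoly, prod_range_succ', C_add, C_sub, C_1, Nat.cast_add, Nat.cast_one,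
    Nat.cast_zero]
  rw [mul_comm]
  congr 1
  · ring
  · exact prod_congr rfl fun i _ => by ring

theorem ascDescPoly_comp_X_sub_one (c d : R) (r : ℕ) :
    (ascDescPoly (c + 1) (d - 1) r).comp (X - 1) = ascDescPoly c d r := by
  simp only [ascDescPoly, Polynomial.prod_comp, mul_comp, sub_comp, add_comp, X_comp, C_comp,
    natCast_comp, one_comp, C_add, C_sub, C_1]
  exact prod_congr rfl fun i _ => by ring

theorem hahnRodrigues_succ (b c d : R) (m : ℕ) :
    hahnRodrigues b c d (m + 1) = hahnStep b c d (hahnRodrigues b (c + 1) (d - 1) m) := by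
  set f : ℕ → ℕ → R[X] := fun j r => (-1) ^ j * descAscPoly b j * ascDescPoly c d r
  have hsplit := sum_choose_succ_mul f m
  have hleft : ∑ j ∈ range (m + 1), (m.choose j : R[X]) * f j (m + 1 - j) =
      (X + C c) * (C d - X) * hahnRodrigues b (c + 1) (d - 1) m := by
    rw [hahnRodrigues, mul_sum]
    refine sum_congr rfl fun j hj => ?_
    rw [show m + 1 - j = m - j + 1 by have := mem_range.mp hj; omega]
    simp only [f, ascDescPoly_succ]
    ring
  have hright : ∑ j ∈ range (m + 1), (m.choose j : R[X]) * f (j + 1) (m - j) =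
      -(X * (C b - X) * (hahnRodrigues b (c + 1) (d - 1) m).comp (X - 1)) := by
    simp only [hahnRodrigues, Polynomial.sum_comp, mul_sum, ← sum_neg_distrib]
    refine sum_congr rfl fun j _ => ?_
    simp only [f, mul_comp, pow_comp, neg_comp, one_comp, natCast_comp, descAscPoly_succ,
      ascDescPoly_comp_X_sub_one]
    ring
  rw [hahnStep, sub_eq_add_neg, ← hleft, ← hright, ← hsplit, hahnRodrigues]
  exact sum_congr rfl fun j _ => by simp only [f]; ring

theorem hahnStep_eq (b c d : R) (p : R[X]) :
    hahnStep b c d p =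
      C (d - c - b) * (X * p) + C (c * d) * p + (C b - X) * (X * (p - p.comp (X - 1))) := by
  simp only [hahnStep, C_sub, C_mul]
  ring

theorem natDegree_hahnStep_le (b c d : R) {p : R[X]} {m : ℕ} (hp : p.natDegree ≤ m) :
    (hahnStep b c d p).natDegree ≤ m + 1 := by
  have hdiff := natDegree_X_mul_sub_comp_le hp
  rw [hahnStep_eq]
  refine natDegree_add_le_of_degree_le (natDegree_add_le_of_degree_le ?_ ?_) ?_
  · exact (natDegree_C_mul_le _ _).trans
      (natDegree_mul_le_of_le natDegree_X_le hp |>.trans (by omega))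
  · exact (natDegree_C_mul_le _ _).trans (by omega)
  · exact natDegree_mul_le_of_le (natDegree_sub_le_of_le (natDegree_C _).le natDegree_X_le) hdiff
      |>.trans (by omega)

theorem coeff_hahnStep (b c d : R) {p : R[X]} {m : ℕ} (hp : p.natDegree ≤ m) :
    (hahnStep b c d p).coeff (m + 1) = (d - c - b - m) * p.coeff m := by
  have hdiff := natDegree_X_mul_sub_comp_le hp
  have hdiff_top := coeff_X_mul_sub_comp hp
  rw [hahnStep_eq]
  generalize X * (p - p.comp (X - 1)) = δ at hdiff hdiff_top ⊢
  rw [coeff_add, coeff_add, coeff_C_mul, coeff_X_mul, coeff_C_mul, sub_mul (C b), coeff_sub,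
    coeff_C_mul, coeff_X_mul, hdiff_top, coeff_eq_zero_of_natDegree_lt (n := m + 1) (by omega),
    coeff_eq_zero_of_natDegree_lt (n := m + 1) (by omega)]
  ring

theorem natDegree_hahnRodrigues_le (b c d : R) (m : ℕ) :
    (hahnRodrigues b c d m).natDegree ≤ m := by
  induction m generalizing c d with
  | zero => simp [hahnRodrigues, descAscPoly, ascDescPoly]
  | succ m ih => exact hahnRodrigues_succ b c d m ▸ natDegree_hahnStep_le b c d (ih _ _)

theorem coeff_hahnRodrigues (b c d : R) (m : ℕ) :
    (hahnRodrigues b c d m).coeff m = ∏ i ∈ range m, (d - c - b + 1 - m - i) := by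
  induction m generalizing c d with
  | zero => simp [hahnRodrigues, descAscPoly, ascDescPoly]
  | succ m ih =>
    rw [hahnRodrigues_succ, coeff_hahnStep b c d (natDegree_hahnRodrigues_le b _ _ m), ih,
      prod_range_succ', mul_comm]
    congr 1
    · exact prod_congr rfl fun i _ => by push_cast; ring
    · push_cast; ring

theorem eval_descAscPoly (b x : R) (j : ℕ) :
    (descAscPoly b j).eval x = ∏ i ∈ range j, (x - i) * (b - x + i) := by
  simp [descAscPoly, eval_prod]

theorem eval_ascDescPoly (c d x : R) (r : ℕ) :
    (ascDescPoly c d r).eval x = ∏ i ∈ range r, (x + c + i) * (d - x - i) := by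
  simp [ascDescPoly, eval_prod]

theorem eval_hahnRodrigues (b c d x : R) (m : ℕ) :
    (hahnRodrigues b c d m).eval x = ∑ j ∈ range (m + 1), (-1) ^ j * (m.choose j : R) *
      (∏ i ∈ range j, (x - i) * (b - x + i)) * ∏ i ∈ range (m - j), (x + c + i) * (d - x - i) := by
  simp [hahnRodrigues, eval_finsetSum, eval_descAscPoly, eval_ascDescPoly]

theorem eval_descAscPoly_natCast_of_lt (b : R) {m j : ℕ} (h : m < j) :
    (descAscPoly b j).eval (m : R) = 0 := by
  rw [eval_descAscPoly]
  exact prod_eq_zero (mem_range.mpr h) (by rw [sub_self, zero_mul])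

theorem eval_ascDescPoly_natCast_of_lt (c : R) {m N r : ℕ} (hm : m ≤ N) (h : N < m + r) :
    (ascDescPoly c N r).eval (m : R) = 0 := by
  rw [eval_ascDescPoly]
  refine prod_eq_zero (i := N - m) (mem_range.mpr (by omega)) ?_
  rw [Nat.cast_sub hm, sub_sub, add_sub_cancel, sub_self, mul_zero]

theorem factorial_mul_prod_range_add_sub (t j : ℕ) :
    (t ! : R) * ∏ i ∈ range j, ((t : R) + j - i) = (t + j)! := by
  induction j with
  | zero => simp
  | succ j ih =>
    have hshift : ∏ i ∈ range j, ((t : R) + (j + 1 : ℕ) - (i + 1 : ℕ)) =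
        ∏ i ∈ range j, ((t : R) + j - i) := prod_congr rfl fun i _ => by push_cast; ring
    rw [prod_range_succ', hshift, ← add_assoc, factorial_succ, Nat.cast_mul, ← ih]
    push_cast
    ring

theorem sum_neg_one_pow_mul_choose_mul_add_pow_eq_zero {k n : ℕ}
    (hk : k < n) (x : R) : ∑ j ∈ range (n + 1), (-1) ^ j * (n.choose j : R) * (x + j) ^ k = 0 := by
  have h := congr_fun (fwdDiff_iter_pow_eq_zero_of_lt (R := R) hk) x
  rw [fwdDiff_iter_eq_sum_shift, Pi.zero_apply] at h
  rw [← neg_one_pow_mul_eq_zero_iff (n := n), mul_sum, ← h]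
  refine sum_congr rfl fun j hj => ?_
  obtain ⟨l, rfl⟩ := Nat.exists_eq_add_of_le (mem_range_succ_iff.mp hj)
  simp only [zsmul_eq_mul, nsmul_eq_mul, mul_one, Int.cast_mul, Int.cast_pow, Int.cast_neg,
    Int.cast_one, Int.cast_natCast, Nat.add_sub_cancel_left, pow_add]
  have hsq : (-1 : R) ^ j * (-1) ^ j = 1 := by rw [← mul_pow, neg_one_mul, neg_neg, one_pow]
  linear_combination ((-1 : R) ^ l * (j + l).choose j * (x + j) ^ k) * hsq

end CommRing

theorem sum_range_eq_sum_range_add_of_eq_zero {M : Type*} [AddCommMonoid M] {f : ℕ → M}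
    {N j L : ℕ} (hL : j + L ≤ N) (hlow : ∀ m < j, f m = 0)
    (hhigh : ∀ m ≤ N, j + L < m → f m = 0) :
    ∑ m ∈ range (N + 1), f m = ∑ t ∈ range (L + 1), f (j + t) := by
  rw [← Nat.add_sub_cancel_left (n := j) (m := L + 1), ← sum_Ico_eq_sum_range]
  refine (sum_subset (fun m hm => ?_) fun m hm hm' => ?_).symm
  · simp only [mem_Ico, mem_range] at hm ⊢
    omega
  · simp only [mem_Ico, mem_range, not_and_or, not_le, not_lt] at hm hm'
    rcases hm' with hm' | hm'
    · exact hlow m hm'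
    · exact hhigh m (by omega) (by omega)

section Field

variable {K : Type*} [Field K] [CharZero K]

noncomputable def hahnWeight (α β : K) (N m : ℕ) : K :=
  (∏ i ∈ range m, (α + i)) * (∏ i ∈ range (N - m), (β + i)) / (m ! * (N - m)!)

theorem eval_descAscPoly_mul_eval_ascDescPoly_mul_hahnWeight (α β : K) {n N j t : ℕ}
    (hj : j ≤ n) (ht : t + n ≤ N) :
    (descAscPoly (β + N) j).eval ((t + j : ℕ) : K) *
        (ascDescPoly α N (n - j)).eval ((t + j : ℕ) : K) * hahnWeight α β N (t + j) =
      (∏ i ∈ range (t + n), (α + i)) * (∏ i ∈ range (N - t), (β + i)) / (t ! * (N - n - t)!) := by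
  obtain ⟨r, rfl⟩ := Nat.exists_eq_add_of_le hj
  obtain ⟨s, rfl⟩ := Nat.exists_eq_add_of_le ht
  rw [eval_descAscPoly, eval_ascDescPoly, hahnWeight, prod_mul_distrib, prod_mul_distrib,
    show t + (j + r) + s - (t + j) = s + r by omega, show j + r - j = r by omega,
    show t + (j + r) + s - t = s + r + j by omega, show t + (j + r) + s - (j + r) - t = s by omega,
    show t + (j + r) = t + j + r by omega, prod_range_add (fun i => α + i) (t + j),
    prod_range_add _ (s + r), ← mul_div_assoc,
    div_eq_div_iff (by simp [factorial_ne_zero]) (by simp [factorial_ne_zero]),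
    ← factorial_mul_prod_range_add_sub t j, ← factorial_mul_prod_range_add_sub s r]
  push_cast
  -- `ring_nf` also normalises the factors inside the products, which identifies the shifted ones.
  ring_nf

theorem sum_eval_hahnRodrigues_mul_pow_mul_hahnWeight_eq_zero (α β : K) {n N k : ℕ} (hnN : n ≤ N)
    (hk : k < n) :
    ∑ m ∈ range (N + 1),
      (hahnRodrigues (β + N) α N n).eval (m : K) * (m : K) ^ k * hahnWeight α β N m = 0 := by
  set g : ℕ → K := fun t =>
    (∏ i ∈ range (t + n), (α + i)) * (∏ i ∈ range (N - t), (β + i)) / (t ! * (N - n - t)!)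
  have hterm : ∀ j ∈ range (n + 1), ∑ m ∈ range (N + 1),
      (descAscPoly (β + N) j).eval (m : K) * (ascDescPoly α N (n - j)).eval (m : K) *
        hahnWeight α β N m * (m : K) ^ k = ∑ t ∈ range (N - n + 1), g t * ((t : K) + j) ^ k := by
    intro j hj
    have hjn := mem_range_succ_iff.mp hj
    rw [sum_range_eq_sum_range_add_of_eq_zero (j := j) (L := N - n) (by omega)
      (fun m hm => by rw [eval_descAscPoly_natCast_of_lt _ hm, zero_mul, zero_mul, zero_mul])
      (fun m hm hm' => by
        rw [eval_ascDescPoly_natCast_of_lt _ hm (by omega), mul_zero, zero_mul, zero_mul])]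
    refine sum_congr rfl fun t ht => ?_
    rw [add_comm j t, eval_descAscPoly_mul_eval_ascDescPoly_mul_hahnWeight α β hjn
      (by have := mem_range_succ_iff.mp ht; omega)]
    push_cast
    rfl
  calc _ = ∑ j ∈ range (n + 1), (-1) ^ j * (n.choose j : K) * ∑ m ∈ range (N + 1),
        (descAscPoly (β + N) j).eval (m : K) * (ascDescPoly α N (n - j)).eval (m : K) *
          hahnWeight α β N m * (m : K) ^ k := by
        simp only [hahnRodrigues, eval_finsetSum, sum_mul, mul_sum]
        rw [sum_comm]
        refine sum_congr rfl fun j _ => sum_congr rfl fun m _ => ?_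
        simp only [eval_mul, eval_pow, eval_neg, eval_one, eval_natCast]
        ring
    _ = ∑ t ∈ range (N - n + 1), g t *
          ∑ j ∈ range (n + 1), (-1) ^ j * (n.choose j : K) * ((t : K) + j) ^ k := by
        rw [sum_congr rfl fun j hj => congrArg _ (hterm j hj)]
        simp only [mul_sum]
        rw [sum_comm]
        exact sum_congr rfl fun t _ => sum_congr rfl fun j _ => by ring
    _ = 0 := sum_eq_zero fun t _ => by
        rw [sum_neg_one_pow_mul_choose_mul_add_pow_eq_zero hk, mul_zero]

end Field

theorem stmt_4_general (N n : ℕ) (hnN : n ≤ N) (α β : ℝ)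
    (hαβ : ∀ m : ℤ, 0 ≤ m → m ≤ 2 * (N : ℤ) - 2 → α + β ≠ -(m : ℝ)) (Q : ℝ → ℝ)
    (hQ : ∀ x : ℝ, Q x = ∑ j ∈ Finset.range (n + 1),
      (-1 : ℝ) ^ j * (n.choose j : ℝ) *
        (∏ i ∈ Finset.range j, ((x - (i : ℝ)) * (β + (N : ℝ) - x + (i : ℝ)))) *
        ∏ i ∈ Finset.range (n - j), ((x + α + (i : ℝ)) * ((N : ℝ) - x - (i : ℝ)))) :
    (∃ p : Polynomial ℝ, p.degree = (n : ℕ) ∧ ∀ x : ℝ, Q x = p.eval x) ∧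
    (∀ k : ℕ, k < n →
      ∑ m ∈ Finset.range (N + 1),
        Q m * (m : ℝ) ^ k *
          ((∏ i ∈ Finset.range m, (α + (i : ℝ))) *
            (∏ i ∈ Finset.range (N - m), (β + (i : ℝ))) /
              ((m.factorial : ℝ) * ((N - m).factorial : ℝ))) = 0) := by
  set P := hahnRodrigues (β + N) α (N : ℝ) n
  have hQP : ∀ x, Q x = P.eval x := fun x => by rw [hQ, eval_hahnRodrigues]
  have hlead : P.coeff n ≠ 0 := by
    rw [coeff_hahnRodrigues, prod_ne_zero_iff]
    intro i hi
    have hin := mem_range.mp hi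
    have hne := hαβ ((n : ℤ) - 1 + i) (by omega) (by omega)
    push_cast at hne
    contrapose! hne
    linarith
  refine ⟨⟨P, degree_eq_of_le_of_coeff_ne_zero ?_ hlead, hQP⟩, fun k hk => ?_⟩
  · exact degree_le_of_natDegree_le (natDegree_hahnRodrigues_le _ _ _ n)
  · simp only [hQP]
    exact sum_eval_hahnRodrigues_mul_pow_mul_hahnWeight_eq_zero α β hnN hk

/-- The Hahn case of the paper's Proposition: the polynomial
`Q(x) = Σ_{j=0}^{n} (−1)^j C(n,j) Π_{i=0}^{j−1}[(x−i)(β+N−x+i)] Π_{i=0}^{n−j−1}[(x+α+i)(N−x−i)]`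
collapses to degree exactly `n` and is orthogonal to `x^k`, `k < n`, with respect to the
Hahn weight `(α)_m(β)_{N−m}/(m!(N−m)!)` on `{0,…,N}`. -/
theorem stmt_4 (N n : ℕ) (hnN : n ≤ N) (α β : ℝ)
    (hα : ∀ m : ℤ, 0 ≤ m → m ≤ (N : ℤ) - 1 → α ≠ -(m : ℝ))
    (hβ : ∀ m : ℤ, 0 ≤ m → m ≤ (N : ℤ) - 1 → β ≠ -(m : ℝ))
    (hαβ : ∀ m : ℤ, 0 ≤ m → m ≤ 2 * (N : ℤ) - 2 → α + β ≠ -(m : ℝ)) (Q : ℝ → ℝ)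
    (hQ : ∀ x : ℝ, Q x = ∑ j ∈ Finset.range (n + 1),
      (-1 : ℝ) ^ j * (n.choose j : ℝ) *
        (∏ i ∈ Finset.range j, ((x - (i : ℝ)) * (β + (N : ℝ) - x + (i : ℝ)))) *
        ∏ i ∈ Finset.range (n - j), ((x + α + (i : ℝ)) * ((N : ℝ) - x - (i : ℝ)))) :
    (∃ p : Polynomial ℝ, p.degree = (n : ℕ) ∧ ∀ x : ℝ, Q x = p.eval x) ∧
    (∀ k : ℕ, k < n →
      ∑ m ∈ Finset.range (N + 1),
        Q m * (m : ℝ) ^ k *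
          ((∏ i ∈ Finset.range m, (α + (i : ℝ))) *
            (∏ i ∈ Finset.range (N - m), (β + (i : ℝ))) /
              ((m.factorial : ℝ) * ((N - m).factorial : ℝ))) = 0) :=
  stmt_4_general N n hnN α β hαβ Q hQ
end

section
/- Fix r ≥ 1, n ∈ ℕ, B ∈ ℝ with B ≠ 0 and B ≠ (−1)^r, natural numbers N_1, …, N_r with n ≤ N_k for all k, and real numbers γ_1, …, γ_r such that γ_j − γ_k is not an integer whenever j ≠ k. Define P : ℝ → ℝ by P(x) = Σ_{j=0}^{n} (−1)^j C(n,j) B^(−j) · Π_{k=1}^{r} [ Π_{i=0}^{j−1} (x − γ_k − i) · Π_{i=0}^{n−j−1} (N_k − x + γ_k − i) ]. Then: (i) P is the evaluation of a real polynomial of degree exactly r·n; (ii) for every index l ∈ {1,…,r} and every natural number k < n, Σ_{m=0}^{N_l} P(γ_l + m) · (γ_l + m)^k · B^m · Π_{k'=1}^{r} [ 1/(Γ(m + γ_l − γ_{k'} + 1) · Γ(N_{k'} − m − γ_l + γ_{k'} + 1)) ] = 0. -/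
/-!
On the lattice `γ l + ℤ` the falling factorials in `P` combine with the Gamma factors of the
weight through `a (a - 1) ⋯ (a - j + 1) / Γ (a + 1) = 1 / Γ (a + 1 - j)`, which turns `P · R` into
the Rodrigues form `∇ⁿ Rₙ`. Summation by parts moves `∇ⁿ` onto `(γ l + m) ^ k`, where it becomes
an `n`-th difference of a polynomial of degree `k < n`, hence zero; there are no boundary terms
because `1 / Γ` vanishes at the non-positive integers.

Every summand of `P` has degree `r n` with leading coefficient `((-1) ^ (n - j)) ^ r`, and the
binomial theorem sums these to `((-1) ^ r - B⁻¹) ^ n`, which vanishes only for `B = (-1) ^ r`.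
-/

open Finset Polynomial

namespace Real

/- Mathlib's `Gamma` is `0` at its poles, so `(Gamma s)⁻¹` is the entire reciprocal Gamma
function and this recurrence needs no hypothesis on `s`. -/
theorem inv_Gamma_eq_mul_inv_Gamma_add_one (s : ℝ) : (Gamma s)⁻¹ = s * (Gamma (s + 1))⁻¹ := by
  rcases eq_or_ne s 0 with rfl | hs
  · simp
  · rw [Gamma_add_one hs, mul_inv, ← mul_assoc, mul_inv_cancel₀ hs, one_mul]

theorem prod_range_sub_mul_inv_Gamma (a : ℝ) (j : ℕ) :
    (∏ i ∈ range j, (a - i)) * (Gamma (a + 1))⁻¹ = (Gamma (a + 1 - j))⁻¹ := by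
  induction j with
  | zero => simp
  | succ j ih =>
    rw [prod_range_succ, mul_right_comm, ih, Nat.cast_succ, show a + 1 - (j + 1) = a - j by ring,
      inv_Gamma_eq_mul_inv_Gamma_add_one (a - j), sub_add_eq_add_sub, mul_comm]

theorem Gamma_intCast_eq_zero {z : ℤ} (hz : z ≤ 0) : Gamma z = 0 :=
  (Gamma_eq_zero_iff _).2 ⟨z.natAbs, by rw [Nat.cast_natAbs, abs_of_nonpos hz]; push_cast; ring⟩

end Real

theorem sum_range_neg_one_pow_mul_choose_mul_eval_eq_zero {R : Type*} [CommRing R] {p : R[X]}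
    {n : ℕ} (hp : p.natDegree < n) (x : R) :
    ∑ j ∈ range (n + 1), (-1) ^ j * (n.choose j : R) * p.eval (x + j) = 0 := by
  have h := congrFun (fwdDiff_iter_eq_zero_of_degree_lt hp) x
  rw [fwdDiff_iter_eq_sum_shift, Pi.zero_apply] at h
  refine ((isUnit_neg_one.pow n).mul_right_eq_zero).1 ?_
  rw [mul_sum, ← h]
  refine sum_congr rfl fun j hj => ?_
  obtain ⟨d, rfl⟩ := Nat.exists_eq_add_of_le (Nat.lt_succ_iff.1 (mem_range.1 hj))
  simp only [Nat.add_sub_cancel_left, zsmul_eq_mul, nsmul_eq_mul, mul_one]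
  push_cast
  have hsq : (-1 : R) ^ j * (-1) ^ j = 1 := by rw [← mul_pow]; simp
  linear_combination ((-1) ^ d * ((j + d).choose j : R) * p.eval (x + j)) * hsq

theorem natDegree_prod_le_card_mul {ι R : Type*} [CommSemiring R] (s : Finset ι) (f : ι → R[X])
    {d : ℕ} (h : ∀ i ∈ s, (f i).natDegree ≤ d) : (∏ i ∈ s, f i).natDegree ≤ #s * d :=
  (natDegree_prod_le s f).trans ((sum_le_card_nsmul s _ d h).trans_eq (smul_eq_mul _ _))

section LinearFactors

variable {R : Type*} [CommRing R] (a b : ℕ → R) (j s : ℕ)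

theorem natDegree_prod_range_X_sub_C_le : (∏ i ∈ range j, (X - C (a i))).natDegree ≤ j := by
  simpa using natDegree_prod_le_card_mul (range j) _ fun i _ => natDegree_X_sub_C_le (a i)

theorem natDegree_C_sub_X_le (c : R) : (C c - X).natDegree ≤ 1 :=
  natDegree_sub_le_of_le (natDegree_C c).le natDegree_X_le

theorem natDegree_prod_range_C_sub_X_le : (∏ i ∈ range s, (C (b i) - X)).natDegree ≤ s := by
  simpa using natDegree_prod_le_card_mul (range s) _ fun i _ => natDegree_C_sub_X_le (b i)

theorem natDegree_prod_X_sub_C_mul_prod_C_sub_X_le :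
    ((∏ i ∈ range j, (X - C (a i))) * ∏ i ∈ range s, (C (b i) - X)).natDegree ≤ j + s :=
  natDegree_mul_le_of_le (natDegree_prod_range_X_sub_C_le a j) (natDegree_prod_range_C_sub_X_le b s)

theorem coeff_prod_X_sub_C_mul_prod_C_sub_X :
    ((∏ i ∈ range j, (X - C (a i))) * ∏ i ∈ range s, (C (b i) - X)).coeff (j + s) = (-1) ^ s := by
  have ha := coeff_prod_of_natDegree_le (range j) _ 1 fun i _ => natDegree_X_sub_C_le (a i)
  have hb := coeff_prod_of_natDegree_le (range s) _ 1 fun i _ => natDegree_C_sub_X_le (b i)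
  simp only [card_range, mul_one] at ha hb
  rw [coeff_mul_add_eq_of_natDegree_le (natDegree_prod_range_X_sub_C_le a j)
    (natDegree_prod_range_C_sub_X_le b s), ha, hb]
  simp [coeff_X]

end LinearFactors

theorem sum_range_neg_one_pow_mul_choose_mul_zpow_neg {K : Type*} [Field K] (B : K) (r n : ℕ) :
    ∑ j ∈ range (n + 1), (-1) ^ j * (n.choose j : K) * B ^ (-(j : ℤ)) * ((-1) ^ (n - j)) ^ r
      = ((-1) ^ r - B⁻¹) ^ n := by
  rw [sub_eq_neg_add, add_pow]
  refine sum_congr rfl fun j _ => ?_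
  rw [zpow_neg, zpow_natCast, ← pow_mul, mul_comm (n - j), pow_mul]
  ring

theorem sum_range_mul_intCast_sub {R : Type*} [CommRing R] {M n j : ℕ} (hj : j ≤ n)
    (f : ℕ → R) {G : ℤ → R} (hneg : ∀ t < 0, G t = 0) (hbig : ∀ t, (M : ℤ) < t + n → G t = 0) :
    ∑ m ∈ range (M + 1), f m * G (m - j) = ∑ t ∈ range (M + 1), f (t + j) * G t := by
  have hext : ∑ m ∈ range (M + 1), f m * G (m - j) = ∑ m ∈ range (j + (M + 1)), f m * G (m - j) :=
    sum_subset (range_subset_range.2 (Nat.le_add_left _ _)) fun m hm hmM => by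
      rw [hbig _ (by simp only [mem_range, not_lt] at hm hmM; omega), mul_zero]
  rw [hext, sum_range_add, sum_eq_zero fun m hm => by
    rw [hneg _ (by simp only [mem_range] at hm; omega), mul_zero], zero_add]
  exact sum_congr rfl fun t _ => by rw [add_comm j t]; push_cast; rw [add_sub_cancel_right]

theorem sum_range_mul_sum_neg_one_pow_mul_choose_mul_sub {R : Type*} [CommRing R] {M n : ℕ}
    (f : ℕ → R) {G : ℤ → R} (hneg : ∀ t < 0, G t = 0) (hbig : ∀ t, (M : ℤ) < t + n → G t = 0) :
    ∑ m ∈ range (M + 1), f m * ∑ j ∈ range (n + 1), (-1) ^ j * (n.choose j : R) * G (m - j)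
      = ∑ t ∈ range (M + 1), G t * ∑ j ∈ range (n + 1), (-1) ^ j * (n.choose j : R) * f (t + j) :=
  calc _ = ∑ j ∈ range (n + 1), (-1) ^ j * (n.choose j : R) *
        ∑ m ∈ range (M + 1), f m * G (m - j) := by
        simp only [mul_sum]
        rw [sum_comm]
        exact sum_congr rfl fun j _ => sum_congr rfl fun m _ => by ring
    _ = ∑ j ∈ range (n + 1), (-1) ^ j * (n.choose j : R) * ∑ t ∈ range (M + 1), f (t + j) * G t :=
        sum_congr rfl fun j hj => by
          rw [sum_range_mul_intCast_sub (Nat.lt_succ_iff.1 (mem_range.1 hj)) f hneg hbig]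
    _ = _ := by
        simp only [mul_sum]
        rw [sum_comm]
        exact sum_congr rfl fun t _ => sum_congr rfl fun j _ => by ring

noncomputable section Kravchuk

variable {r : ℕ} (B : ℝ) (N : Fin r → ℕ) (γ : Fin r → ℝ) (n : ℕ)

def kravchukRodrigues (x : ℝ) : ℝ :=
  ∑ j ∈ range (n + 1), (-1) ^ j * (n.choose j : ℝ) * B ^ (-(j : ℤ)) *
    ∏ k, ((∏ i ∈ range j, (x - γ k - i)) * ∏ i ∈ range (n - j), ((N k : ℝ) - x + γ k - i))

def kravchukRodriguesTerm (j : ℕ) : ℝ[X] :=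
  ∏ k, ((∏ i ∈ range j, (X - C (γ k + i))) * ∏ i ∈ range (n - j), (C (N k + γ k - i) - X))

def kravchukRodriguesPoly : ℝ[X] :=
  ∑ j ∈ range (n + 1), C ((-1) ^ j * (n.choose j : ℝ) * B ^ (-(j : ℤ))) *
    kravchukRodriguesTerm N γ n j

theorem eval_kravchukRodriguesPoly (x : ℝ) :
    (kravchukRodriguesPoly B N γ n).eval x = kravchukRodrigues B N γ n x := by
  rw [kravchukRodriguesPoly, eval_finsetSum]
  refine sum_congr rfl fun j _ => ?_
  simp only [kravchukRodriguesTerm, eval_mul, eval_C, eval_prod, eval_sub, eval_X]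
  congr 1
  refine prod_congr rfl fun k _ => ?_
  congr 1 <;> refine prod_congr rfl fun i _ => by ring

variable {n} {j : ℕ}

theorem natDegree_kravchukRodriguesTerm_le (hj : j ≤ n) :
    (kravchukRodriguesTerm N γ n j).natDegree ≤ r * n := by
  have := natDegree_prod_le_card_mul univ _ fun k _ =>
    Nat.add_sub_cancel' hj ▸ natDegree_prod_X_sub_C_mul_prod_C_sub_X_le
      (fun i => γ k + i) (fun i => N k + γ k - i) j (n - j)
  rwa [card_univ, Fintype.card_fin] at this

theorem coeff_kravchukRodriguesTerm (hj : j ≤ n) :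
    (kravchukRodriguesTerm N γ n j).coeff (r * n) = ((-1) ^ (n - j)) ^ r := by
  have := coeff_prod_of_natDegree_le univ _ n fun k _ =>
    Nat.add_sub_cancel' hj ▸ natDegree_prod_X_sub_C_mul_prod_C_sub_X_le
      (fun i => γ k + i) (fun i => N k + γ k - i) j (n - j)
  rw [card_univ, Fintype.card_fin] at this
  rw [kravchukRodriguesTerm, this, prod_congr rfl fun k _ => Nat.add_sub_cancel' hj ▸
    coeff_prod_X_sub_C_mul_prod_C_sub_X (fun i => γ k + i) (fun i => N k + γ k - i) j (n - j),
    prod_const, card_univ, Fintype.card_fin]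

variable (n)

theorem degree_kravchukRodriguesPoly (hB : B ≠ (-1) ^ r) :
    (kravchukRodriguesPoly B N γ n).degree = (r * n : ℕ) := by
  have hcoeff : (kravchukRodriguesPoly B N γ n).coeff (r * n) = ((-1) ^ r - B⁻¹) ^ n := by
    rw [kravchukRodriguesPoly, finsetSum_coeff, ← sum_range_neg_one_pow_mul_choose_mul_zpow_neg]
    exact sum_congr rfl fun j hj => by
      rw [coeff_C_mul, coeff_kravchukRodriguesTerm N γ (Nat.lt_succ_iff.1 (mem_range.1 hj))]
  refine degree_eq_of_le_of_coeff_ne_zero ?_ (hcoeff ▸ pow_ne_zero _ (sub_ne_zero.2 fun h => ?_))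
  · refine degree_le_of_natDegree_le (natDegree_sum_le_of_forall_le _ _ fun j hj => ?_)
    exact (natDegree_C_mul_le _ _).trans
      (natDegree_kravchukRodriguesTerm_le N γ (Nat.lt_succ_iff.1 (mem_range.1 hj)))
  · exact hB (by rw [← inv_inv B, ← h, ← inv_pow, inv_neg, inv_one])
/- The paper's weight `Rₙ` at `x = γ l + t`, up to the factor `∏ k, b k ^ (γ l - γ k)`, which
does not depend on `t`; `n = 0` gives `R`. -/
def kravchukWeight (l : Fin r) (t : ℤ) : ℝ :=
  B ^ t * ∏ k, ((Real.Gamma (t + γ l - γ k + 1))⁻¹ * (Real.Gamma (N k - n - t - γ l + γ k + 1))⁻¹)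

variable {B N γ n}

theorem kravchukWeight_eq_zero_of_neg (l : Fin r) {t : ℤ} (ht : t < 0) :
    kravchukWeight B N γ n l t = 0 := by
  refine mul_eq_zero_of_right _ (prod_eq_zero (mem_univ l) ?_)
  rw [add_sub_cancel_right, ← Int.cast_one, ← Int.cast_add, Real.Gamma_intCast_eq_zero (by omega),
    inv_zero, zero_mul]

theorem kravchukWeight_eq_zero_of_lt (l : Fin r) {t : ℤ} (ht : (N l : ℤ) < t + n) :
    kravchukWeight B N γ n l t = 0 := by
  refine mul_eq_zero_of_right _ (prod_eq_zero (mem_univ l) ?_)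
  have : (N l : ℝ) - n - t - γ l + γ l + 1 = ((N l - n - t + 1 : ℤ) : ℝ) := by push_cast; ring
  rw [this, Real.Gamma_intCast_eq_zero (by omega), inv_zero, mul_zero]

theorem kravchukRodrigues_mul_kravchukWeight (hB : B ≠ 0) (l : Fin r) (m : ℤ) :
    kravchukRodrigues B N γ n (γ l + m) * kravchukWeight B N γ 0 l m
      = ∑ j ∈ range (n + 1), (-1) ^ j * (n.choose j : ℝ) * kravchukWeight B N γ n l (m - j) := by
  rw [kravchukRodrigues, sum_mul]
  refine sum_congr rfl fun j hj => ?_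
  have hjn : j ≤ n := Nat.lt_succ_iff.1 (mem_range.1 hj)
  have hfactor : ∀ k, ((∏ i ∈ range j, (γ l + m - γ k - i)) *
      ∏ i ∈ range (n - j), ((N k : ℝ) - (γ l + m) + γ k - i)) *
      ((Real.Gamma (m + γ l - γ k + 1))⁻¹ * (Real.Gamma (N k - (0 : ℕ) - m - γ l + γ k + 1))⁻¹)
      = (Real.Gamma ((m - j : ℤ) + γ l - γ k + 1))⁻¹ *
        (Real.Gamma (N k - n - (m - j : ℤ) - γ l + γ k + 1))⁻¹ := by
    intro k
    have ha := Real.prod_range_sub_mul_inv_Gamma (γ l + m - γ k) j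
    have hb := Real.prod_range_sub_mul_inv_Gamma (N k - (γ l + m) + γ k) (n - j)
    rw [mul_mul_mul_comm]
    convert congrArg₂ (· * ·) ha hb using 5 <;> push_cast [Nat.cast_sub hjn] <;> ring
  have hpow : B ^ (m - j : ℤ) = B ^ (-(j : ℤ)) * B ^ m := by
    rw [← zpow_add₀ hB, neg_add_eq_sub]
  rw [kravchukWeight, kravchukWeight, ← prod_congr rfl fun k _ => hfactor k, hpow]
  simp only [prod_mul_distrib]
  ring

theorem sum_pow_mul_kravchukRodrigues_mul_kravchukWeight (hB : B ≠ 0) (l : Fin r) {k : ℕ}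
    (hk : k < n) : ∑ m ∈ range (N l + 1),
      (γ l + m) ^ k * (kravchukRodrigues B N γ n (γ l + m) * kravchukWeight B N γ 0 l m) = 0 := by
  have hrodrigues (m : ℕ) := kravchukRodrigues_mul_kravchukWeight (N := N) (γ := γ) (n := n) hB l m
  simp only [Int.cast_natCast] at hrodrigues
  simp only [hrodrigues]
  rw [sum_range_mul_sum_neg_one_pow_mul_choose_mul_sub (fun m : ℕ => (γ l + m) ^ k)
    (fun _ => kravchukWeight_eq_zero_of_neg l) (fun _ => kravchukWeight_eq_zero_of_lt l)]
  refine sum_eq_zero fun t _ => mul_eq_zero_of_right _ ?_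
  have hdeg : ((X + C (γ l)) ^ k).natDegree < n := by
    rwa [natDegree_pow, natDegree_X_add_C, mul_one]
  rw [← sum_range_neg_one_pow_mul_choose_mul_eval_eq_zero hdeg (t : ℝ)]
  refine sum_congr rfl fun j _ => ?_
  simp only [eval_pow, eval_add, eval_X, eval_C, Nat.cast_add]
  ring

end Kravchuk

theorem stmt_7_general (r : ℕ) (n : ℕ) (B : ℝ) (hB0 : B ≠ 0) (hB1 : B ≠ (-1 : ℝ) ^ r)
    (N : Fin r → ℕ) (γ : Fin r → ℝ) (P : ℝ → ℝ)
    (hP : ∀ x : ℝ, P x = ∑ j ∈ Finset.range (n + 1),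
      (-1 : ℝ) ^ j * (n.choose j : ℝ) * B ^ (-(j : ℤ)) *
        ∏ k : Fin r,
          ((∏ i ∈ Finset.range j, (x - γ k - (i : ℝ))) *
            ∏ i ∈ Finset.range (n - j), ((N k : ℝ) - x + γ k - (i : ℝ)))) :
    (∃ p : Polynomial ℝ, p.degree = (r * n : ℕ) ∧ ∀ x : ℝ, P x = p.eval x) ∧
    (∀ l : Fin r, ∀ k : ℕ, k < n →
      ∑ m ∈ Finset.range (N l + 1),
        P (γ l + m) * (γ l + m) ^ k * B ^ m *
          ∏ k' : Fin r,
            (1 / (Real.Gamma ((m : ℝ) + γ l - γ k' + 1) *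
              Real.Gamma ((N k' : ℝ) - m - γ l + γ k' + 1))) = 0) := by
  obtain rfl : P = kravchukRodrigues B N γ n := funext hP
  refine ⟨⟨kravchukRodriguesPoly B N γ n, degree_kravchukRodriguesPoly B N γ n hB1,
    fun x => (eval_kravchukRodriguesPoly B N γ n x).symm⟩, fun l k hk => ?_⟩
  rw [← sum_pow_mul_kravchukRodrigues_mul_kravchukWeight hB0 l hk]
  refine sum_congr rfl fun m _ => ?_
  simp only [kravchukWeight, Int.cast_natCast, zpow_natCast, Nat.cast_zero, sub_zero, one_div,
    mul_inv]
  ring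

/-- The paper's main Theorem specialized to a product of `r` Kravchuk weights on shifted
lattices `γ_k + {0,…,N_k}`: under Condition MD2 (`B ≠ (−1)^r`) the Rodrigues polynomial
`P` has degree exactly `r·n` and satisfies the multiple orthogonality relations. -/
theorem stmt_7 (r : ℕ) (hr : 1 ≤ r) (n : ℕ) (B : ℝ) (hB0 : B ≠ 0) (hB1 : B ≠ (-1 : ℝ) ^ r)
    (N : Fin r → ℕ) (hnN : ∀ k : Fin r, n ≤ N k) (γ : Fin r → ℝ)
    (hγ : ∀ j k : Fin r, j ≠ k → ∀ z : ℤ, γ j - γ k ≠ (z : ℝ)) (P : ℝ → ℝ)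
    (hP : ∀ x : ℝ, P x = ∑ j ∈ Finset.range (n + 1),
      (-1 : ℝ) ^ j * (n.choose j : ℝ) * B ^ (-(j : ℤ)) *
        ∏ k : Fin r,
          ((∏ i ∈ Finset.range j, (x - γ k - (i : ℝ))) *
            ∏ i ∈ Finset.range (n - j), ((N k : ℝ) - x + γ k - (i : ℝ)))) :
    (∃ p : Polynomial ℝ, p.degree = (r * n : ℕ) ∧ ∀ x : ℝ, P x = p.eval x) ∧
    (∀ l : Fin r, ∀ k : ℕ, k < n →
      ∑ m ∈ Finset.range (N l + 1),
        P (γ l + m) * (γ l + m) ^ k * B ^ m *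
          ∏ k' : Fin r,
            (1 / (Real.Gamma ((m : ℝ) + γ l - γ k' + 1) *
              Real.Gamma ((N k' : ℝ) - m - γ l + γ k' + 1))) = 0) :=
  stmt_7_general r n B hB0 hB1 N γ P hP
end

section
/- Fix n ∈ ℕ, b > 0, and γ_1, γ_2 ∈ ℝ with 0 < |γ_1 − γ_2| < 1. For j ∈ {1,2} let j' denote the other index and define W_j(m) = b^m / (m! · Γ(m + γ_j − γ_{j'} + 1)) for m ∈ ℕ, and define P : ℝ → ℝ by P(x) = Σ_{j=0}^{n} (−1)^j C(n,j) b^(−j) · Π_{i=0}^{j−1} [(x − γ_1 − i)(x − γ_2 − i)]. Then: (i) W_j(m) > 0 for all m ∈ ℕ and j ∈ {1,2}; (ii) P is the evaluation of a real polynomial of degree exactly 2n; (iii) for every j ∈ {1,2} and every natural number k < n, the series Σ_{m=0}^{∞} P(γ_j + m) · (γ_j + m)^k · W_j(m) converges and has sum 0. -/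
/-!
On the lattice `γ + ℕ`, with `δ = γ - γ'`, the factor `∏_{i<j} (x - γ - i)(x - γ' - i)` at
`x = γ + m` equals `m!/(m-j)! · Γ(m+δ+1)/Γ(m-j+δ+1)`, which is exactly `b^j W(m-j) / W(m)`
(and `0` for `j > m`). So `P(γ+m) W(m) = ∇ⁿ W(m)` is the Rodrigues formula. The weight decays
like `b^m / (m!)²`, so summation by parts is legitimate and moves `∇ⁿ` onto `(γ+m)^k` as the
forward difference `Δⁿ`, which kills polynomials of degree `< n`.
-/

open Finset Polynomial

open scoped Nat

section FiniteDifferences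

theorem sum_neg_one_pow_mul_choose_mul_pow_eq_zero {k n : ℕ} (hk : k < n) (y : ℝ) :
    ∑ j ∈ range (n + 1), (-1 : ℝ) ^ j * n.choose j * (y + j) ^ k = 0 := by
  have hΔ := congrFun (fwdDiff_iter_pow_eq_zero_of_lt (R := ℝ) hk) y
  rw [fwdDiff_iter_eq_sum_shift] at hΔ
  calc ∑ j ∈ range (n + 1), (-1 : ℝ) ^ j * n.choose j * (y + j) ^ k
      = (-1) ^ n * ∑ j ∈ range (n + 1),
          (((-1 : ℤ) ^ (n - j) * n.choose j) • (y + j • (1 : ℝ)) ^ k) := by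
        rw [mul_sum]
        refine sum_congr rfl fun j hj => ?_
        obtain ⟨l, rfl⟩ := Nat.exists_eq_add_of_le (Nat.lt_succ_iff.mp (mem_range.mp hj))
        have hsign : (-1 : ℝ) ^ (j + l) * (-1) ^ l = (-1) ^ j := by
          rw [pow_add, mul_assoc, ← pow_add, ← two_mul, pow_mul, neg_one_sq, one_pow, mul_one]
        simp only [zsmul_eq_mul, nsmul_eq_mul, mul_one, Nat.add_sub_cancel_left]
        push_cast
        rw [← hsign]
        ring
    _ = 0 := by rw [hΔ, Pi.zero_apply, mul_zero]

/-- `∇ⁿ w`, with `w` extended by zero to the negative integers. -/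
def iterBwdDiff (n : ℕ) (w : ℕ → ℝ) (m : ℕ) : ℝ :=
  ∑ j ∈ range (n + 1), (-1 : ℝ) ^ j * n.choose j * if j ≤ m then w (m - j) else 0

theorem hasSum_mul_iterBwdDiff {n : ℕ} {f w : ℕ → ℝ}
    (hf : ∀ m, ∑ j ∈ range (n + 1), (-1 : ℝ) ^ j * n.choose j * f (m + j) = 0)
    (hs : ∀ j, Summable fun m => f (m + j) * w m) :
    HasSum (fun m => f m * iterBwdDiff n w m) 0 := by
  set c : ℕ → ℝ := fun j => (-1 : ℝ) ^ j * n.choose j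
  have hshift (j : ℕ) : HasSum (fun m => c j * if j ≤ m then f m * w (m - j) else 0)
      (c j * ∑' m, f (m + j) * w m) := by
    refine (((add_left_injective j).hasSum_iff fun m hm => ?_).mp ?_).mul_left (c j)
    · rw [if_neg]
      rintro hjm
      exact hm ⟨m - j, Nat.sub_add_cancel hjm⟩
    · simpa [Function.comp_def] using (hs j).hasSum
  have hsum := hasSum_sum fun j (_ : j ∈ range (n + 1)) => hshift j
  have hzero : ∑ j ∈ range (n + 1), c j * ∑' m, f (m + j) * w m = 0 := by
    refine HasSum.unique (hasSum_sum fun j (_ : j ∈ range (n + 1)) =>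
      ((hs j).hasSum.mul_left (c j))) ?_
    convert (hasSum_zero : HasSum (fun _ : ℕ => (0 : ℝ)) 0) with m
    simp only [c, ← mul_assoc, ← sum_mul, hf, zero_mul]
  rw [hzero] at hsum
  convert hsum using 2 with m
  simp only [iterBwdDiff, mul_sum]
  refine sum_congr rfl fun j _ => ?_
  split_ifs <;> ring

end FiniteDifferences

section CharlierWeight

noncomputable def charlierWeight (b δ : ℝ) (m : ℕ) : ℝ :=
  b ^ m / (m ! * Real.Gamma (m + δ + 1))

variable {b δ : ℝ}

theorem natCast_add_add_one_pos (hδ : 0 < δ + 1) (m : ℕ) : (0 : ℝ) < m + δ + 1 := by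
  linarith [m.cast_nonneg (α := ℝ)]

theorem charlierWeight_pos (hb : 0 < b) (hδ : 0 < δ + 1) (m : ℕ) : 0 < charlierWeight b δ m := by
  have hΓ : 0 < Real.Gamma (m + δ + 1) := Real.Gamma_pos_of_pos (natCast_add_add_one_pos hδ m)
  unfold charlierWeight
  positivity

theorem succ_mul_charlierWeight_succ (hδ : 0 < δ + 1) (m : ℕ) :
    (m + 1) * (m + 1 + δ) * charlierWeight b δ (m + 1) = b * charlierWeight b δ m := by
  have hs := natCast_add_add_one_pos hδ m
  have hΓ : Real.Gamma (m + δ + 1) ≠ 0 := (Real.Gamma_pos_of_pos hs).ne'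
  simp only [charlierWeight, Nat.factorial_succ, Nat.cast_mul, Nat.cast_succ]
  rw [show (m : ℝ) + 1 + δ + 1 = m + δ + 1 + 1 by ring, Real.Gamma_add_one hs.ne']
  field_simp
  ring

theorem prod_mul_charlierWeight_add (hδ : 0 < δ + 1) (l j : ℕ) :
    (∏ i ∈ range j, (((l + j : ℕ) : ℝ) - i) * ((l + j : ℕ) + δ - i)) *
      charlierWeight b δ (l + j) = b ^ j * charlierWeight b δ l := by
  induction j with
  | zero => simp
  | succ j ih =>
    have hshift : ∏ i ∈ range j, ((((l + j + 1 : ℕ) : ℝ) - (i + 1 : ℕ)) *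
        ((l + j + 1 : ℕ) + δ - (i + 1 : ℕ))) =
        ∏ i ∈ range j, (((l + j : ℕ) : ℝ) - i) * ((l + j : ℕ) + δ - i) :=
      prod_congr rfl fun i _ => by push_cast; ring
    have hstep := succ_mul_charlierWeight_succ (b := b) hδ (l + j)
    rw [prod_range_succ', ← add_assoc, hshift]
    push_cast at hstep ih ⊢
    linear_combination (∏ i ∈ range j, (((l : ℝ) + j) - i) * (l + j + δ - i)) * hstep + b * ih

theorem summable_pow_mul_charlierWeight (hδ : 0 < δ + 1) (x : ℝ) (k : ℕ) :
    Summable fun m : ℕ => (x + m) ^ k * charlierWeight b δ m := by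
  obtain ⟨t, ht, hmin⟩ := Real.exists_isMinOn_Gamma_Ioi
  have hΓt : 0 < Real.Gamma t := Real.Gamma_pos_of_pos (zero_lt_one.trans ht.1)
  refine .of_norm_bounded
    ((Real.summable_pow_div_factorial (2 ^ k * |b|)).mul_left ((|x| + 1) ^ k / Real.Gamma t))
    fun m => ?_
  have hs := natCast_add_add_one_pos hδ m
  have hΓ : Real.Gamma t ≤ Real.Gamma (m + δ + 1) := hmin (Set.mem_Ioi.mpr hs)
  have hx : |x + m| ≤ (|x| + 1) * 2 ^ m := by
    have h2m : (m : ℝ) + 1 ≤ 2 ^ m := by exact_mod_cast Nat.lt_two_pow_self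
    calc |x + m| ≤ |x| + m := (abs_add_le _ _).trans (by rw [Nat.abs_cast])
      _ ≤ (|x| + 1) * 2 ^ m := by nlinarith [abs_nonneg x]
  calc ‖(x + m) ^ k * charlierWeight b δ m‖
      = |x + m| ^ k * (|b| ^ m / (m ! * Real.Gamma (m + δ + 1))) := by
        simp only [charlierWeight, norm_mul, norm_pow, norm_div, Real.norm_eq_abs, Nat.abs_cast,
          abs_of_pos (Real.Gamma_pos_of_pos hs)]
    _ ≤ ((|x| + 1) * 2 ^ m) ^ k * (|b| ^ m / (m ! * Real.Gamma t)) := by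
        gcongr
    _ = (|x| + 1) ^ k / Real.Gamma t * ((2 ^ k * |b|) ^ m / m !) := by
        rw [mul_pow, mul_pow, ← pow_mul, ← pow_mul, mul_comm m k]
        field_simp

end CharlierWeight

section CharlierPoly

noncomputable def charlierFactor (γ γ' : ℝ) (j : ℕ) : ℝ[X] :=
  ∏ i ∈ range j, (X - C (γ + i)) * (X - C (γ' + i))

noncomputable def charlierPoly (n : ℕ) (b γ γ' : ℝ) : ℝ[X] :=
  ∑ j ∈ range (n + 1), C ((-1) ^ j * n.choose j * b ^ (-(j : ℤ))) * charlierFactor γ γ' j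

theorem charlierFactor_comm (γ γ' : ℝ) (j : ℕ) :
    charlierFactor γ γ' j = charlierFactor γ' γ j :=
  prod_congr rfl fun _ _ => mul_comm _ _

theorem charlierPoly_comm (n : ℕ) (b γ γ' : ℝ) :
    charlierPoly n b γ γ' = charlierPoly n b γ' γ := by
  simp only [charlierPoly, charlierFactor_comm γ γ']

theorem charlierFactor_monic (γ γ' : ℝ) (j : ℕ) : (charlierFactor γ γ' j).Monic :=
  monic_prod_of_monic _ _ fun _ _ => (monic_X_sub_C _).mul (monic_X_sub_C _)

theorem natDegree_charlierFactor (γ γ' : ℝ) (j : ℕ) :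
    (charlierFactor γ γ' j).natDegree = 2 * j := by
  rw [charlierFactor,
    natDegree_prod_of_monic _ _ fun _ _ => (monic_X_sub_C _).mul (monic_X_sub_C _)]
  simp only [(monic_X_sub_C _).natDegree_mul (monic_X_sub_C _), natDegree_X_sub_C, sum_const,
    card_range, smul_eq_mul, mul_comm]

theorem degree_charlierPoly (n : ℕ) {b : ℝ} (hb : b ≠ 0) (γ γ' : ℝ) :
    (charlierPoly n b γ γ').degree = (2 * n : ℕ) := by
  have hdeg (j : ℕ) : (charlierFactor γ γ' j).degree = (2 * j : ℕ) := by
    rw [degree_eq_natDegree (charlierFactor_monic γ γ' j).ne_zero, natDegree_charlierFactor]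
  have hcoeff {j : ℕ} (hj : j ≤ n) : (-1) ^ j * n.choose j * b ^ (-(j : ℤ)) ≠ 0 := by
    simp [hb, (Nat.choose_pos hj).ne']
  rw [charlierPoly, sum_range_succ, degree_add_eq_right_of_degree_lt] <;>
    rw [degree_C_mul (hcoeff le_rfl), hdeg]
  refine (degree_sum_le _ _).trans_lt
    ((Finset.sup_lt_iff (WithBot.bot_lt_coe _)).mpr fun j hj => ?_)
  have hjn := mem_range.mp hj
  rw [degree_C_mul (hcoeff hjn.le), hdeg]
  exact_mod_cast (by omega : 2 * j < 2 * n)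

theorem eval_charlierPoly (n : ℕ) (b γ γ' x : ℝ) :
    (charlierPoly n b γ γ').eval x = ∑ j ∈ range (n + 1),
      (-1 : ℝ) ^ j * n.choose j * b ^ (-(j : ℤ)) * ∏ i ∈ range j, ((x - γ - i) * (x - γ' - i)) := by
  simp [charlierPoly, charlierFactor, eval_finsetSum, eval_prod, sub_sub]

end CharlierPoly

section Orthogonality

variable {b γ γ' : ℝ}

theorem eval_charlierPoly_mul_charlierWeight (n : ℕ) (hb : b ≠ 0) (hδ : 0 < γ - γ' + 1) (m : ℕ) :
    (charlierPoly n b γ γ').eval (γ + m) * charlierWeight b (γ - γ') m =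
      iterBwdDiff n (charlierWeight b (γ - γ')) m := by
  rw [eval_charlierPoly, iterBwdDiff, sum_mul]
  refine sum_congr rfl fun j _ => ?_
  have hprod : ∏ i ∈ range j, ((γ + m - γ - i) * (γ + m - γ' - i)) =
      ∏ i ∈ range j, ((m : ℝ) - i) * (m + (γ - γ') - i) :=
    prod_congr rfl fun i _ => by ring
  rw [hprod]
  split_ifs with hjm
  · obtain ⟨l, rfl⟩ := Nat.exists_eq_add_of_le' hjm
    rw [Nat.add_sub_cancel, mul_assoc _ (∏ i ∈ range j, _), prod_mul_charlierWeight_add hδ,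
      zpow_neg, zpow_natCast, mul_assoc, inv_mul_cancel_left₀ (pow_ne_zero j hb)]
  · rw [prod_eq_zero (mem_range.mpr (not_le.mp hjm)) (by simp), mul_zero, zero_mul, mul_zero]

theorem hasSum_eval_charlierPoly_mul_pow_mul_charlierWeight {n k : ℕ} (hk : k < n) (hb : b ≠ 0)
    (hδ : 0 < γ - γ' + 1) :
    HasSum (fun m : ℕ =>
      (charlierPoly n b γ γ').eval (γ + m) * (γ + m) ^ k * charlierWeight b (γ - γ') m) 0 := by
  have h := hasSum_mul_iterBwdDiff (f := fun m : ℕ => (γ + m) ^ k)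
    (w := charlierWeight b (γ - γ'))
    (fun m => by simpa [add_assoc] using sum_neg_one_pow_mul_choose_mul_pow_eq_zero hk (γ + m))
    (fun j => (summable_pow_mul_charlierWeight (b := b) hδ (γ + j) k).congr fun m => by
      push_cast; ring)
  convert h using 2 with m
  rw [← eval_charlierPoly_mul_charlierWeight n hb hδ m]
  ring

end Orthogonality

theorem stmt_8_general (n : ℕ) (b : ℝ) (hb : 0 < b) (γ₁ γ₂ : ℝ)
    (hγ1 : |γ₁ - γ₂| < 1) (W₁ W₂ : ℕ → ℝ)
    (hW₁ : ∀ m : ℕ, W₁ m = b ^ m / ((m.factorial : ℝ) * Real.Gamma ((m : ℝ) + γ₁ - γ₂ + 1)))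
    (hW₂ : ∀ m : ℕ, W₂ m = b ^ m / ((m.factorial : ℝ) * Real.Gamma ((m : ℝ) + γ₂ - γ₁ + 1)))
    (P : ℝ → ℝ)
    (hP : ∀ x : ℝ, P x = ∑ j ∈ Finset.range (n + 1),
      (-1 : ℝ) ^ j * (n.choose j : ℝ) * b ^ (-(j : ℤ)) *
        ∏ i ∈ Finset.range j, ((x - γ₁ - (i : ℝ)) * (x - γ₂ - (i : ℝ)))) :
    (∀ m : ℕ, 0 < W₁ m ∧ 0 < W₂ m) ∧
    (∃ p : Polynomial ℝ, p.degree = (2 * n : ℕ) ∧ ∀ x : ℝ, P x = p.eval x) ∧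
    (∀ k : ℕ, k < n →
      HasSum (fun m : ℕ => P (γ₁ + m) * (γ₁ + m) ^ k * W₁ m) 0 ∧
      HasSum (fun m : ℕ => P (γ₂ + m) * (γ₂ + m) ^ k * W₂ m) 0) := by
  obtain ⟨hgt, hlt⟩ := abs_lt.mp hγ1
  have hδ₁ : 0 < γ₁ - γ₂ + 1 := by linarith
  have hδ₂ : 0 < γ₂ - γ₁ + 1 := by linarith
  have hW₁' : W₁ = charlierWeight b (γ₁ - γ₂) := funext fun m => by
    rw [hW₁, charlierWeight, add_sub_assoc]
  have hW₂' : W₂ = charlierWeight b (γ₂ - γ₁) := funext fun m => by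
    rw [hW₂, charlierWeight, add_sub_assoc]
  have hP₁ : P = (charlierPoly n b γ₁ γ₂).eval := funext fun x => by rw [hP, eval_charlierPoly]
  have hP₂ : P = (charlierPoly n b γ₂ γ₁).eval := by rw [hP₁, charlierPoly_comm]
  subst hW₁' hW₂'
  refine ⟨fun m => ⟨charlierWeight_pos hb hδ₁ m, charlierWeight_pos hb hδ₂ m⟩,
    ⟨_, degree_charlierPoly n hb.ne' γ₁ γ₂, fun x => by rw [hP₁]⟩, fun k hk => ⟨?_, ?_⟩⟩
  · rw [hP₁]
    exact hasSum_eval_charlierPoly_mul_pow_mul_charlierWeight hk hb.ne' hδ₁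
  · rw [hP₂]
    exact hasSum_eval_charlierPoly_mul_pow_mul_charlierWeight hk hb.ne' hδ₂

/-- The paper's Charlier–Charlier family: the weights `W_j` on the interlacing shifted
lattices `γ_j + ℤ₊` are positive, the Rodrigues polynomial `P` has degree exactly `2n`,
and `P` is orthogonal to `x^k`, `k < n`, with respect to both discrete measures. -/
theorem stmt_8 (n : ℕ) (b : ℝ) (hb : 0 < b) (γ₁ γ₂ : ℝ)
    (hγ0 : 0 < |γ₁ - γ₂|) (hγ1 : |γ₁ - γ₂| < 1) (W₁ W₂ : ℕ → ℝ)
    (hW₁ : ∀ m : ℕ, W₁ m = b ^ m / ((m.factorial : ℝ) * Real.Gamma ((m : ℝ) + γ₁ - γ₂ + 1)))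
    (hW₂ : ∀ m : ℕ, W₂ m = b ^ m / ((m.factorial : ℝ) * Real.Gamma ((m : ℝ) + γ₂ - γ₁ + 1)))
    (P : ℝ → ℝ)
    (hP : ∀ x : ℝ, P x = ∑ j ∈ Finset.range (n + 1),
      (-1 : ℝ) ^ j * (n.choose j : ℝ) * b ^ (-(j : ℤ)) *
        ∏ i ∈ Finset.range j, ((x - γ₁ - (i : ℝ)) * (x - γ₂ - (i : ℝ)))) :
    (∀ m : ℕ, 0 < W₁ m ∧ 0 < W₂ m) ∧
    (∃ p : Polynomial ℝ, p.degree = (2 * n : ℕ) ∧ ∀ x : ℝ, P x = p.eval x) ∧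
    (∀ k : ℕ, k < n →
      HasSum (fun m : ℕ => P (γ₁ + m) * (γ₁ + m) ^ k * W₁ m) 0 ∧
      HasSum (fun m : ℕ => P (γ₂ + m) * (γ₂ + m) ^ k * W₂ m) 0) :=
  stmt_8_general n b hb γ₁ γ₂ hγ1 W₁ W₂ hW₁ hW₂ P hP
end

section
/- Fix n ∈ ℕ, b > 0, α > 0, and γ_1, γ_2 ∈ ℝ with 0 < |γ_1 − γ_2| < 1 and α + γ_1 − γ_2 > 0. Define W_1(m) = b^m · Γ(m + γ_1 − γ_2 + α) / (m! · Γ(m + γ_1 − γ_2 + 1)) and W_2(m) = b^m · Γ(m + α) / (m! · Γ(m + γ_2 − γ_1 + 1)) for m ∈ ℕ, and define P : ℝ → ℝ by P(x) = Σ_{j=0}^{n} (−1)^j C(n,j) b^(−j) · Π_{i=0}^{j−1} [(x − γ_1 − i)(x − γ_2 − i)] · Π_{i=0}^{n−j−1} (x − γ_2 + α + i). Then: (i) W_j(m) > 0 for all m ∈ ℕ and j ∈ {1,2}; (ii) P is the evaluation of a real polynomial of degree exactly 2n; (iii) for every j ∈ {1,2} and every natural number k < n, the series Σ_{m=0}^{∞}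 P(γ_j + m) · (γ_j + m)^k · W_j(m) converges and has sum 0. -/
/-!
On the lattice `γ + ℤ₊` the `j`-th term of the Rodrigues sum, multiplied by the weight at `γ + m`,
cancels against the Gamma factors and equals `V(m - j)` for `m ≥ j` (and vanishes for `m < j`),
where `V` is the weight with `a` raised by `n`. Summing over `m`, the moment of order `k` becomes
`∑_M V(M) ∑_j (-1)^j C(n,j) (γ + M + j)^k`, and the inner sum is an `n`-th finite difference of a
polynomial of degree `k < n`, hence zero. All series converge by the ratio test, since
`V(m+1)/V(m) = b(m+a)/((m+1)(m+μ+1)) → 0`. The `j`-th term of `P` has degree `n + j`, so only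
the last one reaches degree `2n`.
-/

open Finset Filter Topology Polynomial

theorem Real.Gamma_add_nat_eq_mul_prod {x : ℝ} (hx : 0 < x) (j : ℕ) :
    Real.Gamma (x + j) = Real.Gamma x * ∏ i ∈ range j, (x + i) := by
  induction j with
  | zero => simp
  | succ j ih =>
    rw [Nat.cast_succ, ← add_assoc, Real.Gamma_add_one (by positivity), ih, prod_range_succ]
    ring

theorem Finset.prod_range_add_natCast_sub {R : Type*} [CommRing R] (y : R) (j : ℕ) :
    ∏ i ∈ range j, (y + j - i) = ∏ i ∈ range j, (y + 1 + i) := by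
  rw [← prod_range_reflect]
  refine prod_congr rfl fun i hi => ?_
  have hi := mem_range.mp hi
  rw [Nat.cast_sub (by omega), Nat.cast_sub (by omega)]
  push_cast
  ring

theorem tendsto_natCast_add_div_natCast_add (a c : ℝ) :
    Tendsto (fun m : ℕ => (m + a) / (m + c)) atTop (𝓝 1) := by
  have h := (tendsto_natCast_div_add_atTop c).add <| tendsto_const_nhds (x := a).div_atTop <|
    tendsto_atTop_add_const_right _ c tendsto_natCast_atTop_atTop
  simpa only [add_zero, add_div] using h

theorem summable_add_pow_mul_of_tendsto_div_zero {f : ℕ → ℝ} (hf : ∀ m, 0 < f m)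
    (hlim : Tendsto (fun m => f (m + 1) / f m) atTop (𝓝 0)) (c : ℝ) (k : ℕ) :
    Summable fun m : ℕ => ((m : ℝ) + c) ^ k * f m := by
  have hc : ∀ᶠ m : ℕ in atTop, 0 < (m : ℝ) + c :=
    (tendsto_atTop_add_const_right _ c tendsto_natCast_atTop_atTop).eventually_gt_atTop 0
  refine summable_of_ratio_test_tendsto_lt_one zero_lt_one
    (hc.mono fun m hm => (mul_pos (pow_pos hm k) (hf m)).ne') ?_
  have hratio := ((tendsto_natCast_add_div_natCast_add (1 + c) c).pow k).mul hlim
  rw [one_pow, one_mul] at hratio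
  refine hratio.congr' ?_
  filter_upwards [hc] with m hm
  have hm1 : 0 < ((m + 1 : ℕ) : ℝ) + c := by push_cast; linarith
  rw [Real.norm_of_nonneg (mul_pos (pow_pos hm1 k) (hf _)).le,
    Real.norm_of_nonneg (mul_pos (pow_pos hm k) (hf _)).le, mul_div_mul_comm, div_pow]
  push_cast
  ring

theorem sum_range_neg_one_pow_mul_choose_mul_add_pow {n k : ℕ} (hk : k < n) (y : ℝ) :
    ∑ j ∈ range (n + 1), (-1 : ℝ) ^ j * n.choose j * (y + j) ^ k = 0 := by
  have h := congr_fun (fwdDiff_iter_pow_eq_zero_of_lt (R := ℝ) hk) y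
  rw [fwdDiff_iter_eq_sum_shift, Pi.zero_apply] at h
  calc ∑ j ∈ range (n + 1), (-1 : ℝ) ^ j * n.choose j * (y + j) ^ k
      = (-1) ^ n * ∑ j ∈ range (n + 1), ((-1 : ℤ) ^ (n - j) * n.choose j) • (y + j • 1) ^ k := by
        rw [mul_sum]
        refine sum_congr rfl fun j hj => ?_
        have hsign : (-1 : ℝ) ^ j = (-1) ^ n * (-1) ^ (n - j) := by
          rw [← pow_add, show n + (n - j) = j + 2 * (n - j) by
            have := mem_range.mp hj; omega, pow_add, pow_mul]
          norm_num
        simp only [zsmul_eq_mul, nsmul_eq_mul, mul_one, hsign]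
        push_cast
        ring
    _ = 0 := by rw [h, mul_zero]

theorem Polynomial.degree_prod_range_X_sub_C {R : Type*} [CommRing R] [IsDomain R]
    (f : ℕ → R) (s : ℕ) :
    (∏ i ∈ range s, (X - C (f i))).degree = (s : WithBot ℕ) := by
  simp [degree_prod]

theorem Polynomial.degree_sum_range_succ_eq {R : Type*} [Semiring R] {p : ℕ → R[X]} {n d : ℕ}
    (hn : (p n).degree = d) (hlt : ∀ j < n, (p j).degree < d) :
    (∑ j ∈ range (n + 1), p j).degree = d := by
  rw [sum_range_succ, degree_add_eq_right_of_degree_lt, hn]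
  refine (degree_sum_le _ _).trans_lt ?_
  rw [hn]
  exact (Finset.sup_lt_iff (WithBot.bot_lt_coe d)).mpr fun j hj => hlt j (mem_range.mp hj)

namespace CharlierMeixner

/-- The weight `R^{(α)}` of the paper read on a lattice `γ + ℤ₊`: on `γ₁ + ℤ₊` it is `W₁`, with
`a = γ₁ - γ₂ + α` and `μ = γ₁ - γ₂`, and on `γ₂ + ℤ₊` it is `W₂`, with `a = α` and `μ = γ₂ - γ₁`. -/
noncomputable def weight (b a μ : ℝ) (m : ℕ) : ℝ :=
  b ^ m * Real.Gamma (m + a) / (m.factorial * Real.Gamma (m + μ + 1))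

variable {b a μ : ℝ}

theorem weight_pos (hb : 0 < b) (ha : 0 < a) (hμ : -1 < μ) (m : ℕ) : 0 < weight b a μ m := by
  have h1 := Real.Gamma_pos_of_pos (show 0 < (m : ℝ) + a by positivity)
  have h2 := Real.Gamma_pos_of_pos (show 0 < (m : ℝ) + μ + 1 by linarith [m.cast_nonneg (α := ℝ)])
  unfold weight
  positivity

theorem weight_succ_div (hb : 0 < b) (ha : 0 < a) (hμ : -1 < μ) (m : ℕ) :
    weight b a μ (m + 1) / weight b a μ m = (m + a) / (m + (μ + 1)) * (b / (m + 1)) := by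
  have hm : 0 < (m : ℝ) + μ + 1 := by linarith [m.cast_nonneg (α := ℝ)]
  have h1 := (Real.Gamma_pos_of_pos (show 0 < (m : ℝ) + a by positivity)).ne'
  have h2 := (Real.Gamma_pos_of_pos hm).ne'
  have h3 : (m.factorial : ℝ) ≠ 0 := by positivity
  have h4 : (m : ℝ) + (μ + 1) ≠ 0 := by linarith
  unfold weight
  rw [Nat.factorial_succ, Nat.cast_succ, add_right_comm, Real.Gamma_add_one (by positivity),
    add_right_comm _ 1 μ, Real.Gamma_add_one hm.ne', pow_succ]
  push_cast
  field_simp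
  ring

theorem tendsto_weight_succ_div (hb : 0 < b) (ha : 0 < a) (hμ : -1 < μ) :
    Tendsto (fun m => weight b a μ (m + 1) / weight b a μ m) atTop (𝓝 0) := by
  simp_rw [weight_succ_div hb ha hμ]
  simpa using (tendsto_natCast_add_div_natCast_add a (μ + 1)).mul <|
    tendsto_const_nhds (x := b).div_atTop <|
      tendsto_atTop_add_const_right _ 1 tendsto_natCast_atTop_atTop

theorem weight_mul_prod (ha : 0 < a) (m r : ℕ) :
    weight b a μ m * ∏ i ∈ range r, ((m : ℝ) + a + i) = weight b (a + r) μ m := by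
  unfold weight
  rw [← add_assoc, Real.Gamma_add_nat_eq_mul_prod (by positivity)]
  ring

theorem zpow_neg_mul_prod_mul_weight_add (hb : 0 < b) (hμ : -1 < μ) (M j : ℕ) :
    b ^ (-(j : ℤ)) * (∏ i ∈ range j, (((M + j : ℕ) : ℝ) - i) * ((M + j : ℕ) + μ - i)) *
      weight b a μ (M + j) = weight b (a + j) μ M := by
  have hM : 0 < (M : ℝ) + μ + 1 := by linarith [M.cast_nonneg (α := ℝ)]
  have hfact : ((M + j).factorial : ℝ) = M.factorial * ∏ i ∈ range j, ((M : ℝ) + 1 + i) := by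
    rw [← Real.Gamma_nat_eq_factorial, ← Real.Gamma_nat_eq_factorial, Nat.cast_add,
      add_right_comm, Real.Gamma_add_nat_eq_mul_prod (by positivity)]
  have hGamma : Real.Gamma (((M + j : ℕ) : ℝ) + μ + 1) =
      Real.Gamma (M + μ + 1) * ∏ i ∈ range j, ((M : ℝ) + μ + 1 + i) := by
    rw [← Real.Gamma_add_nat_eq_mul_prod hM]
    push_cast
    ring_nf
  have hdesc : ∏ i ∈ range j, (((M + j : ℕ) : ℝ) - i) * ((M + j : ℕ) + μ - i) =
      (∏ i ∈ range j, ((M : ℝ) + 1 + i)) * ∏ i ∈ range j, ((M : ℝ) + μ + 1 + i) := by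
    rw [← prod_range_add_natCast_sub, ← prod_range_add_natCast_sub, ← prod_mul_distrib]
    refine prod_congr rfl fun i _ => ?_
    push_cast
    ring
  have hP1 : ∏ i ∈ range j, ((M : ℝ) + 1 + i) ≠ 0 := prod_ne_zero_iff.mpr fun i _ => by positivity
  have hP2 : ∏ i ∈ range j, ((M : ℝ) + μ + 1 + i) ≠ 0 :=
    prod_ne_zero_iff.mpr fun i _ => by linarith [i.cast_nonneg (α := ℝ)]
  have hG := (Real.Gamma_pos_of_pos hM).ne'
  have h3 : (M.factorial : ℝ) ≠ 0 := by positivity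
  unfold weight
  rw [hfact, hGamma, hdesc, zpow_neg, zpow_natCast, pow_add]
  push_cast
  field_simp
  ring_nf

noncomputable def rodriguesTerm (n j : ℕ) (b a μ y : ℝ) : ℝ :=
  b ^ (-(j : ℤ)) * (∏ i ∈ range j, (y - i) * (y + μ - i)) * ∏ i ∈ range (n - j), (y + a + i)

/-- The polynomial `P` in the coordinate `y` of a lattice `γ + ℤ₊`, with `a`, `μ` as in `weight`. -/
noncomputable def latticeRodrigues (n : ℕ) (b a μ y : ℝ) : ℝ :=
  ∑ j ∈ range (n + 1), (-1) ^ j * n.choose j * rodriguesTerm n j b a μ y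

theorem rodriguesTerm_mul_weight (hb : 0 < b) (ha : 0 < a) (hμ : -1 < μ) {n j : ℕ} (hj : j ≤ n)
    (M : ℕ) :
    rodriguesTerm n j b a μ (M + j : ℕ) * weight b a μ (M + j) = weight b (a + n) μ M := by
  have hprod : ∏ i ∈ range (n - j), (((M + j : ℕ) : ℝ) + a + i) =
      ∏ i ∈ range (n - j), ((M : ℝ) + (a + j) + i) :=
    prod_congr rfl fun i _ => by push_cast; ring
  rw [rodriguesTerm, hprod, mul_right_comm, zpow_neg_mul_prod_mul_weight_add hb hμ,
    weight_mul_prod (by positivity), Nat.cast_sub hj, add_add_sub_cancel]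

theorem rodriguesTerm_natCast_eq_zero_of_lt {n j m : ℕ} (hm : m < j) :
    rodriguesTerm n j b a μ m = 0 := by
  rw [rodriguesTerm, prod_eq_zero (mem_range.mpr hm) (by simp), mul_zero, zero_mul]

theorem hasSum_rodriguesTerm_mul_pow_mul_weight (hb : 0 < b) (ha : 0 < a) (hμ : -1 < μ)
    {n j : ℕ} (hj : j ≤ n) (k : ℕ) (γ : ℝ) :
    HasSum (fun m : ℕ => rodriguesTerm n j b a μ m * (γ + m) ^ k * weight b a μ m)
      (∑' M : ℕ, ((M : ℝ) + (γ + j)) ^ k * weight b (a + n) μ M) := by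
  have hshift : HasSum (fun M : ℕ => rodriguesTerm n j b a μ (M + j : ℕ) * (γ + (M + j : ℕ)) ^ k *
      weight b a μ (M + j)) (∑' M : ℕ, ((M : ℝ) + (γ + j)) ^ k * weight b (a + n) μ M) := by
    have hV := summable_add_pow_mul_of_tendsto_div_zero (weight_pos hb (by positivity) hμ)
      (tendsto_weight_succ_div (a := a + n) hb (by positivity) hμ) (γ + j) k
    convert hV.hasSum using 2 with M
    rw [mul_right_comm, rodriguesTerm_mul_weight hb ha hμ hj]
    push_cast
    ring
  have h := (hasSum_nat_add_iff (f := fun m : ℕ =>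
    rodriguesTerm n j b a μ m * (γ + m) ^ k * weight b a μ m) j).mp hshift
  rwa [sum_eq_zero fun m hm => by
    rw [rodriguesTerm_natCast_eq_zero_of_lt (mem_range.mp hm), zero_mul, zero_mul], add_zero] at h

theorem hasSum_latticeRodrigues_mul_pow_mul_weight (hb : 0 < b) (ha : 0 < a) (hμ : -1 < μ)
    {n k : ℕ} (hk : k < n) (γ : ℝ) :
    HasSum (fun m : ℕ => latticeRodrigues n b a μ m * (γ + m) ^ k * weight b a μ m) 0 := by
  have hV (c : ℝ) := summable_add_pow_mul_of_tendsto_div_zero (weight_pos hb (by positivity) hμ)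
    (tendsto_weight_succ_div (a := a + n) hb (by positivity) hμ) c k
  have hj : ∀ j ∈ range (n + 1), HasSum
      (fun m : ℕ =>
        (-1) ^ j * n.choose j * (rodriguesTerm n j b a μ m * (γ + m) ^ k * weight b a μ m))
      ((-1) ^ j * n.choose j * ∑' M : ℕ, ((M : ℝ) + (γ + j)) ^ k * weight b (a + n) μ M) :=
    fun j hj => (hasSum_rodriguesTerm_mul_pow_mul_weight hb ha hμ
      (Nat.lt_succ_iff.mp (mem_range.mp hj)) k γ).mul_left _
  have hzero : ∑ j ∈ range (n + 1), (-1) ^ j * n.choose j *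
      ∑' M : ℕ, ((M : ℝ) + (γ + j)) ^ k * weight b (a + n) μ M = 0 := by
    simp_rw [← tsum_mul_left]
    rw [← Summable.tsum_finsetSum fun j _ => (hV _).mul_left _]
    refine (tsum_congr fun M => ?_).trans tsum_zero
    calc _ = (∑ j ∈ range (n + 1), (-1 : ℝ) ^ j * n.choose j * (M + γ + j) ^ k) *
          weight b (a + n) μ M := by
          rw [sum_mul]
          exact sum_congr rfl fun j _ => by ring
      _ = 0 := by rw [sum_range_neg_one_pow_mul_choose_mul_add_pow hk, zero_mul]
  convert hasSum_sum hj using 1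
  · ext m
    rw [latticeRodrigues, sum_mul, sum_mul]
    refine sum_congr rfl fun j _ => ?_
    ring
  · exact hzero.symm

noncomputable def rodrigues (n : ℕ) (b γ₁ γ₂ α x : ℝ) : ℝ :=
  ∑ j ∈ range (n + 1), (-1 : ℝ) ^ j * (n.choose j : ℝ) * b ^ (-(j : ℤ)) *
    (∏ i ∈ range j, ((x - γ₁ - (i : ℝ)) * (x - γ₂ - (i : ℝ)))) *
    ∏ i ∈ range (n - j), (x - γ₂ + α + (i : ℝ))

variable {n : ℕ} {γ₁ γ₂ α : ℝ}

theorem rodrigues_left_add (y : ℝ) :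
    rodrigues n b γ₁ γ₂ α (γ₁ + y) = latticeRodrigues n b (γ₁ - γ₂ + α) (γ₁ - γ₂) y := by
  refine sum_congr rfl fun j _ => ?_
  have h₁ (i : ℕ) : (γ₁ + y - γ₁ - i) * (γ₁ + y - γ₂ - i) = (y - i) * (y + (γ₁ - γ₂) - i) := by
    ring
  have h₂ (i : ℕ) : γ₁ + y - γ₂ + α + i = y + (γ₁ - γ₂ + α) + i := by ring
  simp only [rodriguesTerm, h₁, h₂]
  ring

theorem rodrigues_right_add (y : ℝ) :
    rodrigues n b γ₁ γ₂ α (γ₂ + y) = latticeRodrigues n b α (γ₂ - γ₁) y := by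
  refine sum_congr rfl fun j _ => ?_
  have h₁ (i : ℕ) : (γ₂ + y - γ₁ - i) * (γ₂ + y - γ₂ - i) = (y - i) * (y + (γ₂ - γ₁) - i) := by
    ring
  have h₂ (i : ℕ) : γ₂ + y - γ₂ + α + i = y + α + i := by ring
  simp only [rodriguesTerm, h₁, h₂]
  ring

theorem exists_degree_eq_eval_rodrigues (hb : b ≠ 0) :
    ∃ p : ℝ[X], p.degree = (2 * n : ℕ) ∧ ∀ x, rodrigues n b γ₁ γ₂ α x = p.eval x := by
  set q : ℕ → ℝ[X] := fun j => C ((-1) ^ j * n.choose j * b ^ (-(j : ℤ))) *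
    ((∏ i ∈ range j, (X - C (γ₁ + i))) * (∏ i ∈ range j, (X - C (γ₂ + i))) *
      ∏ i ∈ range (n - j), (X - C (γ₂ - α - i)))
  have hq : ∀ j ≤ n, (q j).degree = (n + j : ℕ) := by
    intro j hj
    have hc : (-1) ^ j * n.choose j * b ^ (-(j : ℤ)) ≠ 0 := by
      have := Nat.choose_pos hj
      positivity
    simp only [q, degree_C_mul hc, degree_mul, degree_prod_range_X_sub_C]
    norm_cast
    omega
  refine ⟨∑ j ∈ range (n + 1), q j, degree_sum_range_succ_eq (by rw [hq n le_rfl]; congr 1; omega)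
    fun j hj => by rw [hq j hj.le]; exact_mod_cast (by omega : n + j < 2 * n), fun x => ?_⟩
  rw [eval_finsetSum]
  refine sum_congr rfl fun j _ => ?_
  simp only [q, eval_mul, eval_C, eval_prod, eval_sub, eval_X]
  rw [prod_mul_distrib]
  ring_nf

end CharlierMeixner

open CharlierMeixner

theorem stmt_9_general (n : ℕ) (b α : ℝ) (hb : 0 < b) (hα : 0 < α) (γ₁ γ₂ : ℝ)
    (hγ1 : |γ₁ - γ₂| < 1) (hαγ : 0 < α + γ₁ - γ₂) (W₁ W₂ : ℕ → ℝ)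
    (hW₁ : ∀ m : ℕ, W₁ m = b ^ m * Real.Gamma ((m : ℝ) + γ₁ - γ₂ + α) /
      ((m.factorial : ℝ) * Real.Gamma ((m : ℝ) + γ₁ - γ₂ + 1)))
    (hW₂ : ∀ m : ℕ, W₂ m = b ^ m * Real.Gamma ((m : ℝ) + α) /
      ((m.factorial : ℝ) * Real.Gamma ((m : ℝ) + γ₂ - γ₁ + 1)))
    (P : ℝ → ℝ)
    (hP : ∀ x : ℝ, P x = ∑ j ∈ Finset.range (n + 1),
      (-1 : ℝ) ^ j * (n.choose j : ℝ) * b ^ (-(j : ℤ)) *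
        (∏ i ∈ Finset.range j, ((x - γ₁ - (i : ℝ)) * (x - γ₂ - (i : ℝ)))) *
        ∏ i ∈ Finset.range (n - j), (x - γ₂ + α + (i : ℝ))) :
    (∀ m : ℕ, 0 < W₁ m ∧ 0 < W₂ m) ∧
    (∃ p : Polynomial ℝ, p.degree = (2 * n : ℕ) ∧ ∀ x : ℝ, P x = p.eval x) ∧
    (∀ k : ℕ, k < n →
      HasSum (fun m : ℕ => P (γ₁ + m) * (γ₁ + m) ^ k * W₁ m) 0 ∧
      HasSum (fun m : ℕ => P (γ₂ + m) * (γ₂ + m) ^ k * W₂ m) 0) := by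
  obtain ⟨hμ₁, hγ₁₂⟩ := abs_lt.mp hγ1
  have hμ₂ : -1 < γ₂ - γ₁ := by linarith
  have ha₁ : 0 < γ₁ - γ₂ + α := by linarith
  obtain rfl : W₁ = weight b (γ₁ - γ₂ + α) (γ₁ - γ₂) := funext fun m => by rw [hW₁, weight]; ring_nf
  obtain rfl : W₂ = weight b α (γ₂ - γ₁) := funext fun m => by rw [hW₂, weight]; ring_nf
  obtain rfl : P = rodrigues n b γ₁ γ₂ α := funext hP
  refine ⟨fun m => ⟨weight_pos hb ha₁ hμ₁ m, weight_pos hb hα hμ₂ m⟩,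
    exists_degree_eq_eval_rodrigues hb.ne', fun k hk => ⟨?_, ?_⟩⟩
  · simpa only [rodrigues_left_add] using
      hasSum_latticeRodrigues_mul_pow_mul_weight hb ha₁ hμ₁ hk γ₁
  · simpa only [rodrigues_right_add] using
      hasSum_latticeRodrigues_mul_pow_mul_weight hb hα hμ₂ hk γ₂

/-- The paper's Charlier–Meixner family: the weights `W_j` on the interlacing shifted
lattices `γ_j + ℤ₊` are positive, the Rodrigues polynomial `P` has degree exactly `2n`,
and `P` is orthogonal to `x^k`, `k < n`, with respect to both discrete measures. -/
theorem stmt_9 (n : ℕ) (b α : ℝ) (hb : 0 < b) (hα : 0 < α) (γ₁ γ₂ : ℝ)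
    (hγ0 : 0 < |γ₁ - γ₂|) (hγ1 : |γ₁ - γ₂| < 1) (hαγ : 0 < α + γ₁ - γ₂) (W₁ W₂ : ℕ → ℝ)
    (hW₁ : ∀ m : ℕ, W₁ m = b ^ m * Real.Gamma ((m : ℝ) + γ₁ - γ₂ + α) /
      ((m.factorial : ℝ) * Real.Gamma ((m : ℝ) + γ₁ - γ₂ + 1)))
    (hW₂ : ∀ m : ℕ, W₂ m = b ^ m * Real.Gamma ((m : ℝ) + α) /
      ((m.factorial : ℝ) * Real.Gamma ((m : ℝ) + γ₂ - γ₁ + 1)))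
    (P : ℝ → ℝ)
    (hP : ∀ x : ℝ, P x = ∑ j ∈ Finset.range (n + 1),
      (-1 : ℝ) ^ j * (n.choose j : ℝ) * b ^ (-(j : ℤ)) *
        (∏ i ∈ Finset.range j, ((x - γ₁ - (i : ℝ)) * (x - γ₂ - (i : ℝ)))) *
        ∏ i ∈ Finset.range (n - j), (x - γ₂ + α + (i : ℝ))) :
    (∀ m : ℕ, 0 < W₁ m ∧ 0 < W₂ m) ∧
    (∃ p : Polynomial ℝ, p.degree = (2 * n : ℕ) ∧ ∀ x : ℝ, P x = p.eval x) ∧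
    (∀ k : ℕ, k < n →
      HasSum (fun m : ℕ => P (γ₁ + m) * (γ₁ + m) ^ k * W₁ m) 0 ∧
      HasSum (fun m : ℕ => P (γ₂ + m) * (γ₂ + m) ^ k * W₂ m) 0) :=
  stmt_9_general n b α hb hα γ₁ γ₂ hγ1 hαγ W₁ W₂ hW₁ hW₂ P hP
end
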